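/- arXiv:2409.02459 — 7 statements merged into one kernel-verified Lean document; each statement's English description precedes it below -/
import Mathlib

section
/- Let X and Y be mm-spaces. Then X ≻ Y (X dominates Y in the Lipschitz order) if and only if X ≻₀ Y (X dominates Y with additive error 0). -/
open MeasureTheory Topology Filter Set Metric ENNReal

noncomputable section

/-- The support of a Borel measure: points all of whose open neighborhoods have
positive measure. -/
def msupport {X : Type*} [TopologicalSpace X] [MeasurableSpace X] (μ : Measure X) : Set X :=
  {x | ∀ U : Set X, IsOpen U → x ∈ U → 0 < μ U}

/-- `dis_≻ S = sup { d_Y(y,y') − d_X(x,x') : (x,y),(x',y') ∈ S }`, with `dis_≻ ∅ = 0`. -/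
def disSucc {X Y : Type*} [MetricSpace X] [MetricSpace Y] (S : Set (X × Y)) : ℝ≥0∞ :=
  ⨆ p ∈ S, ⨆ q ∈ S, ENNReal.ofReal (dist p.2 q.2 - dist p.1 q.1)

/-- `dis S = sup { |d_X(x,x') − d_Y(y,y')| : (x,y),(x',y') ∈ S }`, with `dis ∅ = 0`. -/
def disBox {X Y : Type*} [MetricSpace X] [MetricSpace Y] (S : Set (X × Y)) : ℝ≥0∞ :=
  ⨆ p ∈ S, ⨆ q ∈ S, ENNReal.ofReal |dist p.1 q.1 - dist p.2 q.2|

/-- `π` is a coupling of `μ` and `ν`. -/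
def IsCoupling {X Y : Type*} [MeasurableSpace X] [MeasurableSpace Y]
    (π : Measure (X × Y)) (μ : Measure X) (ν : Measure Y) : Prop :=
  IsProbabilityMeasure π ∧ π.map Prod.fst = μ ∧ π.map Prod.snd = ν

/-- `X ≻_ε Y`: the Lipschitz order with additive error `ε`. -/
def LipDomE {X Y : Type*} [MetricSpace X] [MetricSpace Y]
    [MeasurableSpace X] [MeasurableSpace Y]
    (μ : Measure X) (ν : Measure Y) (ε : ℝ) : Prop :=
  ∃ π : Measure (X × Y), IsCoupling π μ ν ∧
    ∃ S : Set (X × Y), IsClosed S ∧ disSucc S ≤ ENNReal.ofReal ε ∧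
      ENNReal.ofReal (1 - ε) ≤ π S

/-- `X ≻ Y`: the Lipschitz order. There is a 1-Lipschitz map
`f : supp m_X → supp m_Y` with `f_* m_X = m_Y`. -/
def LipOrder {X Y : Type*} [MetricSpace X] [MetricSpace Y]
    [MeasurableSpace X] [MeasurableSpace Y]
    (μ : Measure X) (ν : Measure Y) : Prop :=
  ∃ f : msupport μ → msupport ν, LipschitzWith 1 f ∧
    ∀ A : Set Y, MeasurableSet A →
      μ (Subtype.val '' ((fun x => (f x : Y)) ⁻¹' A)) = ν A

/-- The box metric. -/
def boxDist {X Y : Type*} [MetricSpace X] [MetricSpace Y]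
    [MeasurableSpace X] [MeasurableSpace Y]
    (μ : Measure X) (ν : Measure Y) : ℝ≥0∞ :=
  ⨅ (S : Set (X × Y)) (_ : IsClosed S) (π : Measure (X × Y)) (_ : IsCoupling π μ ν),
    max (disBox S) (1 - π S)

/-- The unilateral box metric `□_≻(X,Y) = inf { ε ≥ 0 : X ≻_ε Y }`. -/
def ubox {X Y : Type*} [MetricSpace X] [MetricSpace Y]
    [MeasurableSpace X] [MeasurableSpace Y]
    (μ : Measure X) (ν : Measure Y) : ℝ :=
  sInf {ε : ℝ | 0 ≤ ε ∧ LipDomE μ ν ε}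

/-- The Prokhorov metric
`d_P(μ,ν) = inf { ε > 0 : μ(U_ε(A)) ≥ ν(A) − ε for every Borel A }`. -/
def prokDist {Y : Type*} [MetricSpace Y] [MeasurableSpace Y] (μ ν : Measure Y) : ℝ :=
  sInf {ε : ℝ | 0 < ε ∧ ∀ A : Set Y, MeasurableSet A →
    ν A ≤ μ (Metric.thickening ε A) + ENNReal.ofReal ε}

/-- `f : supp m_X → supp m_Y` is 1-Lipschitz up to an additive error `ε`. -/
def LipUpTo {X Y : Type*} [MetricSpace X] [MetricSpace Y]
    [MeasurableSpace X] [MeasurableSpace Y]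
    (μ : Measure X) (ν : Measure Y) (f : msupport μ → msupport ν) (ε : ℝ) : Prop :=
  ∃ X₀ : Set X, MeasurableSet X₀ ∧ X₀ ⊆ msupport μ ∧
    ENNReal.ofReal (1 - ε) ≤ μ X₀ ∧
    ∀ x x' : msupport μ, (x : X) ∈ X₀ → (x' : X) ∈ X₀ →
      dist (f x : Y) (f x' : Y) ≤ dist (x : X) (x' : X) + ε

/-- `X ≻^{KY}_ε Y`: there is a Borel measurable map `f : supp m_X → supp m_Y`
which is 1-Lipschitz up to `ε` and satisfies `d_P(f_* m_X, m_Y) ≤ ε`. -/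
def KYDom {X Y : Type*} [MetricSpace X] [MetricSpace Y]
    [MeasurableSpace X] [MeasurableSpace Y]
    (μ : Measure X) (ν : Measure Y) (ε : ℝ) : Prop :=
  ∃ f : msupport μ → msupport ν, Measurable f ∧ LipUpTo μ ν f ε ∧
    prokDist (Measure.map (fun x => (f x : Y)) (Measure.comap Subtype.val μ)) ν ≤ ε


/-! A 1-Lipschitz map `f` with `f_* m_X = m_Y` yields the coupling `(id, f)_* m_X`, which is
concentrated on the closure of the graph of `f`, and `dis_≻` of that closure is `0`.
Conversely, `dis_≻ S = 0` says `d_Y(y, y') ≤ d_X(x, x')` on `S`, so `S` is the graph of a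
1-Lipschitz map on its first projection; when `S` is closed and `Y` complete, that projection is
closed, hence contains `supp m_X`, and a coupling concentrated on the graph is the push-forward
of `m_X` under `(id, f)`. -/

section Support

variable {X : Type*} [TopologicalSpace X] [MeasurableSpace X] (μ : Measure X)

theorem msupport_eq_support : msupport μ = μ.support := by
  ext x
  simp only [msupport, Measure.support_eq_forall_isOpen]
  exact forall_congr' fun _ => imp.swap

theorem isClosed_msupport : IsClosed (msupport μ) :=
  msupport_eq_support μ ▸ Measure.isClosed_support

theorem measurableEmbedding_coe_msupport [OpensMeasurableSpace X] :
    MeasurableEmbedding ((↑) : msupport μ → X) :=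
  .subtype_coe (isClosed_msupport μ).measurableSet

theorem ae_mem_msupport [HereditarilyLindelofSpace X] : ∀ᵐ x ∂μ, x ∈ msupport μ :=
  msupport_eq_support μ ▸ Measure.support_mem_ae

end Support

section Dominated

variable {X Y : Type*} [MetricSpace X] [MetricSpace Y] {S : Set (X × Y)}

theorem disSucc_eq_zero_iff :
    disSucc S = 0 ↔ ∀ p ∈ S, ∀ q ∈ S, dist p.2 q.2 ≤ dist p.1 q.1 := by
  simp [disSucc]

theorem dist_snd_le_dist_fst_of_mem_closure
    (hS : ∀ p ∈ S, ∀ q ∈ S, dist p.2 q.2 ≤ dist p.1 q.1) :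
    ∀ p ∈ closure S, ∀ q ∈ closure S, dist p.2 q.2 ≤ dist p.1 q.1 := by
  have : closure S ×ˢ closure S ⊆ {pq | dist pq.1.2 pq.2.2 ≤ dist pq.1.1 pq.2.1} := by
    rw [← closure_prod_eq]
    exact closure_minimal (fun pq hpq => hS _ hpq.1 _ hpq.2)
      (isClosed_le (by fun_prop) (by fun_prop))
  exact fun p hp q hq => this (mk_mem_prod hp hq)

theorem IsClosed.image_fst_of_dist_snd_le [CompleteSpace Y] (hS : IsClosed S)
    (hdom : ∀ p ∈ S, ∀ q ∈ S, dist p.2 q.2 ≤ dist p.1 q.1) :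
    IsClosed (Prod.fst '' S) := by
  refine isClosed_of_closure_subset fun x hx => ?_
  obtain ⟨u, hu, hux⟩ := mem_closure_iff_seq_limit.1 hx
  choose p hpS hpu using hu
  have hp_fst : Tendsto (fun n => (p n).1) atTop (𝓝 x) := hux.congr fun n => (hpu n).symm
  -- the second coordinates are Cauchy because the first ones are
  have hp_snd : CauchySeq fun n => (p n).2 := by
    refine Metric.cauchySeq_iff.2 fun ε hε => ?_
    obtain ⟨N, hN⟩ := Metric.cauchySeq_iff.1 hp_fst.cauchySeq ε hε
    exact ⟨N, fun m hm n hn => (hdom _ (hpS m) _ (hpS n)).trans_lt (hN m hm n hn)⟩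
  obtain ⟨y, hy⟩ := cauchySeq_tendsto_of_complete hp_snd
  exact ⟨(x, y), hS.mem_of_tendsto (hp_fst.prodMk_nhds hy) (.of_forall hpS), rfl⟩

end Dominated

section Coupling

variable {X Y : Type*} [MeasurableSpace X] [MeasurableSpace Y]
  {π : Measure (X × Y)} {μ : Measure X} {ν : Measure Y}

theorem IsCoupling.ae_fst (hπ : IsCoupling π μ ν) {P : X → Prop} (hP : ∀ᵐ x ∂μ, P x) :
    ∀ᵐ p ∂π, P p.1 :=
  ae_of_ae_map measurable_fst.aemeasurable (hπ.2.1.symm ▸ hP)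

theorem IsCoupling.ae_snd (hπ : IsCoupling π μ ν) {P : Y → Prop} (hP : ∀ᵐ y ∂ν, P y) :
    ∀ᵐ p ∂π, P p.2 :=
  ae_of_ae_map measurable_snd.aemeasurable (hπ.2.2.symm ▸ hP)

theorem IsCoupling.measure_eq_of_ae_mem_iff (hπ : IsCoupling π μ ν) {B : Set X} {A : Set Y}
    (hB : MeasurableSet B) (hA : MeasurableSet A) (hBA : ∀ᵐ p ∂π, p.1 ∈ B ↔ p.2 ∈ A) :
    μ B = ν A := by
  rw [← hπ.2.1, ← hπ.2.2, Measure.map_apply measurable_fst hB,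
    Measure.map_apply measurable_snd hA]
  exact measure_congr (eventuallyEq_set.2 hBA)

theorem IsCoupling.msupport_subset_closure_image_fst [TopologicalSpace X]
    [OpensMeasurableSpace X] (hπ : IsCoupling π μ ν) {T : Set (X × Y)}
    (hT : ∀ᵐ p ∂π, p ∈ T) : msupport μ ⊆ closure (Prod.fst '' T) := by
  refine fun x hx => mem_closure_iff.2 fun U hU hxU => ?_
  have hpos : π (Prod.fst ⁻¹' U ∩ T) ≠ 0 := by
    rw [measure_inter_conull (show π Tᶜ = 0 from hT),
      ← Measure.map_apply measurable_fst hU.measurableSet, hπ.2.1]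
    exact (hx U hU hxU).ne'
  obtain ⟨p, hpU, hpT⟩ := nonempty_of_measure_ne_zero hpos
  exact ⟨p.1, hpU, p, hpT, rfl⟩

end Coupling

section LipschitzOrder

variable {X Y : Type*} [MetricSpace X] [MeasurableSpace X] [BorelSpace X]
  [MetricSpace Y] [MeasurableSpace Y] [BorelSpace Y] {μ : Measure X} {ν : Measure Y}

theorem LipOrder.lipDomE_zero [HereditarilyLindelofSpace X] [IsProbabilityMeasure μ]
    (h : LipOrder μ ν) : LipDomE μ ν 0 := by
  obtain ⟨f, hf, hpush⟩ := h
  have he := measurableEmbedding_coe_msupport μ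
  set κ := μ.comap ((↑) : msupport μ → X)
  set g : msupport μ → X × Y := fun x => (x, f x)
  have hg : Continuous g :=
    continuous_subtype_val.prodMk (continuous_subtype_val.comp hf.continuous)
  have hκ : κ.map (↑) = μ := by
    rw [he.map_comap, Subtype.range_coe]
    exact Measure.restrict_eq_self_of_ae_mem (ae_mem_msupport μ)
  have : IsProbabilityMeasure κ :=
    ⟨by simpa [Measure.map_apply he.measurable MeasurableSet.univ] using congrArg (· univ) hκ⟩
  have hfst : (κ.map g).map Prod.fst = μ := by
    rwa [Measure.map_map measurable_fst hg.measurable]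
  have hsnd : (κ.map g).map Prod.snd = ν := by
    ext A hA
    rw [Measure.map_map measurable_snd hg.measurable,
      Measure.map_apply (measurable_snd.comp hg.measurable) hA, he.comap_apply]
    exact hpush A hA
  have hdom := dist_snd_le_dist_fst_of_mem_closure (S := range g) <| by
    rintro _ ⟨x, rfl⟩ _ ⟨x', rfl⟩
    simpa [g, Subtype.dist_eq] using hf.dist_le_mul x x'
  refine ⟨κ.map g, ⟨Measure.isProbabilityMeasure_map hg.aemeasurable, hfst, hsnd⟩,
    closure (range g), isClosed_closure,
    by rw [ENNReal.ofReal_zero, disSucc_eq_zero_iff.2 hdom], ?_⟩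
  rw [Measure.map_apply hg.measurable isClosed_closure.measurableSet,
    preimage_eq_univ_iff.2 subset_closure, measure_univ]
  simp

theorem LipDomE.lipOrder_of_zero [HereditarilyLindelofSpace X] [HereditarilyLindelofSpace Y]
    [CompleteSpace Y] (h : LipDomE μ ν 0) : LipOrder μ ν := by
  obtain ⟨π, hπ, S, hS, hdis, hπS⟩ := h
  have := hπ.1
  rw [ENNReal.ofReal_zero, nonpos_iff_eq_zero, disSucc_eq_zero_iff] at hdis
  set S' := S ∩ msupport μ ×ˢ msupport ν
  have hS' : IsClosed S' := hS.inter ((isClosed_msupport μ).prod (isClosed_msupport ν))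
  have hdom : ∀ p ∈ S', ∀ q ∈ S', dist p.2 q.2 ≤ dist p.1 q.1 :=
    fun p hp q hq => hdis p hp.1 q hq.1
  have hae : ∀ᵐ p ∂π, p ∈ S' := by
    have hS_ae : ∀ᵐ p ∂π, p ∈ S := by
      rw [ae_mem_iff_measure_eq hS.nullMeasurableSet, measure_univ]
      exact le_antisymm prob_le_one (by simpa using hπS)
    filter_upwards [hS_ae, hπ.ae_fst (ae_mem_msupport μ), hπ.ae_snd (ae_mem_msupport ν)]
      with p h₁ h₂ h₃ using ⟨h₁, h₂, h₃⟩
  have hsupp : msupport μ ⊆ Prod.fst '' S' :=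
    (hS'.image_fst_of_dist_snd_le hdom).closure_eq ▸ hπ.msupport_subset_closure_image_fst hae
  have hex (x : msupport μ) : ∃ y : msupport ν, ((x : X), (y : Y)) ∈ S' := by
    obtain ⟨p, hp, hpx⟩ := hsupp x.2
    exact ⟨⟨p.2, hp.2.2⟩, hpx ▸ hp⟩
  choose f hf using hex
  have hlip : LipschitzWith 1 f := .of_dist_le_mul fun x x' => by
    simpa [Subtype.dist_eq] using hdom _ (hf x) _ (hf x')
  refine ⟨f, hlip, fun A hA => hπ.measure_eq_of_ae_mem_iff ?_ hA ?_⟩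
  · exact (measurableEmbedding_coe_msupport μ).measurableSet_image.2
      ((continuous_subtype_val.comp hlip.continuous).measurable hA)
  · filter_upwards [hae] with p hp
    -- `S'` is the graph of `f` over `msupport μ`
    have hfp : (f ⟨p.1, hp.2.1⟩ : Y) = p.2 :=
      dist_le_zero.1 (by simpa using hdom _ (hf ⟨p.1, hp.2.1⟩) p hp)
    simp [hfp, hp.2.1]

end LipschitzOrder

theorem lipOrder_iff_lipDomE_zero_general {X Y : Type*} [MetricSpace X]
    [TopologicalSpace.SeparableSpace X] [MeasurableSpace X] [BorelSpace X]
    [MetricSpace Y] [CompleteSpace Y] [TopologicalSpace.SeparableSpace Y]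
    [MeasurableSpace Y] [BorelSpace Y]
    (μ : Measure X) (ν : Measure Y) [IsProbabilityMeasure μ] :
    LipOrder μ ν ↔ LipDomE μ ν 0 :=
  ⟨LipOrder.lipDomE_zero, LipDomE.lipOrder_of_zero⟩

/-- `X ≻ Y` iff `X ≻₀ Y`. -/
theorem lipOrder_iff_lipDomE_zero {X Y : Type*} [MetricSpace X] [CompleteSpace X]
    [TopologicalSpace.SeparableSpace X] [MeasurableSpace X] [BorelSpace X]
    [MetricSpace Y] [CompleteSpace Y] [TopologicalSpace.SeparableSpace Y]
    [MeasurableSpace Y] [BorelSpace Y]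
    (μ : Measure X) (ν : Measure Y) [IsProbabilityMeasure μ] [IsProbabilityMeasure ν] :
    LipOrder μ ν ↔ LipDomE μ ν 0 :=
  lipOrder_iff_lipDomE_zero_general μ ν
end
end

section
/- Let X, Y, Z be mm-spaces and s, t ≥ 0 real numbers. If X ≻_s Y and Y ≻_t Z, then X ≻_{s+t} Z. -/
open MeasureTheory Topology Filter Set Metric ENNReal

noncomputable section

open ProbabilityTheory

/-- Inclusion–exclusion bound for probability measures. -/
lemma aux_inter_bound {Ω : Type*} [MeasurableSpace Ω] (P : Measure Ω) [IsProbabilityMeasure P]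
    {A B : Set Ω} (hB : MeasurableSet B) {s t : ℝ} (ht : 0 ≤ t)
    (hA : ENNReal.ofReal (1 - s) ≤ P A) (hBm : ENNReal.ofReal (1 - t) ≤ P B) :
    ENNReal.ofReal (1 - (s + t)) ≤ P (A ∩ B) := by
  have hcompl : P Bᶜ ≤ ENNReal.ofReal t := by
    rw [prob_compl_eq_one_sub hB]
    refine tsub_le_iff_right.mpr ?_
    calc (1 : ℝ≥0∞) = ENNReal.ofReal (t + (1 - t)) := by norm_num
    _ ≤ ENNReal.ofReal t + ENNReal.ofReal (1 - t) := ENNReal.ofReal_add_le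
    _ ≤ ENNReal.ofReal t + P B := by gcongr
  have h2 : P A ≤ P (A ∩ B) + P Bᶜ := by
    refine le_trans (measure_mono (fun x hx => ?_)) (measure_union_le _ _)
    by_cases hxB : x ∈ B
    · exact Or.inl ⟨hx, hxB⟩
    · exact Or.inr hxB
  calc ENNReal.ofReal (1 - (s + t)) = ENNReal.ofReal ((1 - s) - t) := by congr 1; ring
  _ = ENNReal.ofReal (1 - s) - ENNReal.ofReal t := ENNReal.ofReal_sub _ ht
  _ ≤ P A - P Bᶜ := tsub_le_tsub hA hcompl
  _ ≤ P (A ∩ B) := tsub_le_iff_right.mpr h2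

/-- If `X ≻_s Y` and `Y ≻_t Z`, then `X ≻_(s+t) Z`. -/
theorem lipDomE_trans {X Y Z : Type*} [MetricSpace X] [CompleteSpace X]
    [TopologicalSpace.SeparableSpace X] [MeasurableSpace X] [BorelSpace X]
    [MetricSpace Y] [CompleteSpace Y] [TopologicalSpace.SeparableSpace Y]
    [MeasurableSpace Y] [BorelSpace Y]
    [MetricSpace Z] [CompleteSpace Z] [TopologicalSpace.SeparableSpace Z]
    [MeasurableSpace Z] [BorelSpace Z]
    (μ : Measure X) (ν : Measure Y) (ρ : Measure Z)
    [IsProbabilityMeasure μ] [IsProbabilityMeasure ν] [IsProbabilityMeasure ρ]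
    (s t : ℝ) (hs : 0 ≤ s) (ht : 0 ≤ t)
    (hXY : LipDomE μ ν s) (hYZ : LipDomE ν ρ t) :
    LipDomE μ ρ (s + t) := by
  haveI : SecondCountableTopology X := UniformSpace.secondCountable_of_separable X
  haveI : SecondCountableTopology Y := UniformSpace.secondCountable_of_separable Y
  haveI : SecondCountableTopology Z := UniformSpace.secondCountable_of_separable Z
  haveI : Nonempty Z := by
    by_contra h
    rw [not_nonempty_iff] at h
    have h1 := measure_univ (μ := ρ)
    rw [Set.univ_eq_empty_iff.mpr h, measure_empty] at h1
    exact zero_ne_one h1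
  obtain ⟨π₁, ⟨hπ₁p, hπ₁1, hπ₁2⟩, S₁, hS₁c, hS₁d, hS₁m⟩ := hXY
  obtain ⟨π₂, ⟨hπ₂p, hπ₂1, hπ₂2⟩, S₂, hS₂c, hS₂d, hS₂m⟩ := hYZ
  haveI := hπ₁p; haveI := hπ₂p
  set κ : Kernel (X × Y) Z :=
    Kernel.comap π₂.condKernel (Prod.snd : X × Y → Y) measurable_snd with hκ
  haveI : IsMarkovKernel κ := by rw [hκ]; infer_instance
  set lam : Measure ((X × Y) × Z) := π₁ ⊗ₘ κ with hlam
  haveI : IsProbabilityMeasure lam := by rw [hlam]; infer_instance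
  -- the three projection maps
  set g : (X × Y) × Z → Y × Z := fun p => (p.1.2, p.2) with hgdef
  set h : (X × Y) × Z → X × Z := fun p => (p.1.1, p.2) with hhdef
  have hg : Measurable g := (measurable_snd.comp measurable_fst).prodMk measurable_snd
  have hh : Measurable h := (measurable_fst.comp measurable_fst).prodMk measurable_snd
  -- marginal on X × Y
  have hmapfst : lam.map Prod.fst = π₁ := Measure.fst_compProd π₁ κ
  -- marginal on Y × Z
  have hdis : ν ⊗ₘ π₂.condKernel = π₂ := by
    have h0 := π₂.disintegrate π₂.condKernel
    have : π₂.fst = ν := hπ₂1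
    rwa [this] at h0
  have hmapg : lam.map g = π₂ := by
    ext B hB
    rw [Measure.map_apply hg hB, hlam, Measure.compProd_apply (hg hB)]
    have hrw : ∀ p : X × Y, κ p (Prod.mk p ⁻¹' (g ⁻¹' B))
        = π₂.condKernel p.2 (Prod.mk p.2 ⁻¹' B) := by
      intro p
      rw [hκ, Kernel.comap_apply]
      rfl
    simp_rw [hrw]
    rw [← lintegral_map (Kernel.measurable_kernel_prodMk_left hB) measurable_snd, hπ₁2,
      ← Measure.compProd_apply hB, hdis]
  -- the glued coupling
  set π : Measure (X × Z) := lam.map h with hπdef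
  have hcoup : IsCoupling π μ ρ := by
    refine ⟨Measure.isProbabilityMeasure_map hh.aemeasurable, ?_, ?_⟩
    · rw [hπdef, Measure.map_map measurable_fst hh]
      have : (Prod.fst ∘ h) = (Prod.fst ∘ (Prod.fst : (X × Y) × Z → X × Y)) := rfl
      rw [this, ← Measure.map_map measurable_fst measurable_fst, hmapfst, hπ₁1]
    · rw [hπdef, Measure.map_map measurable_snd hh]
      have : (Prod.snd ∘ h) = (Prod.snd ∘ g) := rfl
      rw [this, ← Measure.map_map measurable_snd hg, hmapg, hπ₂2]
  -- the good set
  set T : Set ((X × Y) × Z) := (S₁ ×ˢ (univ : Set Z)) ∩ (g ⁻¹' S₂) with hTdef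
  have hTmeas : ENNReal.ofReal (1 - (s + t)) ≤ lam T := by
    have hA : ENNReal.ofReal (1 - s) ≤ lam (S₁ ×ˢ (univ : Set Z)) := by
      have : S₁ ×ˢ (univ : Set Z) = Prod.fst ⁻¹' S₁ := by
        ext p; simp [Set.mem_prod]
      rw [this, ← Measure.map_apply measurable_fst hS₁c.measurableSet, hmapfst]
      exact hS₁m
    have hBm : ENNReal.ofReal (1 - t) ≤ lam (g ⁻¹' S₂) := by
      rw [← Measure.map_apply hg hS₂c.measurableSet, hmapg]
      exact hS₂m
    exact aux_inter_bound lam (hg hS₂c.measurableSet) ht hA hBm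
  -- distortion control on S₁ and S₂, in real form
  have hd₁ : ∀ p ∈ S₁, ∀ q ∈ S₁, dist p.2 q.2 - dist p.1 q.1 ≤ s := by
    intro p hp q hq
    have h1 : ENNReal.ofReal (dist p.2 q.2 - dist p.1 q.1) ≤ ENNReal.ofReal s := by
      refine le_trans ?_ hS₁d
      exact le_iSup₂_of_le p hp (le_iSup₂_of_le q hq le_rfl)
    exact (ENNReal.ofReal_le_ofReal_iff hs).mp h1
  have hd₂ : ∀ p ∈ S₂, ∀ q ∈ S₂, dist p.2 q.2 - dist p.1 q.1 ≤ t := by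
    intro p hp q hq
    have h1 : ENNReal.ofReal (dist p.2 q.2 - dist p.1 q.1) ≤ ENNReal.ofReal t := by
      refine le_trans ?_ hS₂d
      exact le_iSup₂_of_le p hp (le_iSup₂_of_le q hq le_rfl)
    exact (ENNReal.ofReal_le_ofReal_iff ht).mp h1
  -- distortion of the image of T
  have himg : ∀ p ∈ h '' T, ∀ q ∈ h '' T, dist p.2 q.2 - dist p.1 q.1 ≤ s + t := by
    rintro _ ⟨p, ⟨hp1, hp2⟩, rfl⟩ _ ⟨q, ⟨hq1, hq2⟩, rfl⟩
    have e1 : dist (g p).2 (g q).2 - dist (g p).1 (g q).1 ≤ t := hd₂ _ hp2 _ hq2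
    have e2 : dist p.1.2 q.1.2 - dist p.1.1 q.1.1 ≤ s := hd₁ _ hp1.1 _ hq1.1
    simp only [hgdef, hhdef] at e1 e2 ⊢
    linarith
  refine ⟨π, hcoup, closure (h '' T), isClosed_closure, ?_, ?_⟩
  · -- distortion of the closure
    have hckey : ∀ p ∈ closure (h '' T), ∀ q ∈ closure (h '' T),
        dist p.2 q.2 - dist p.1 q.1 ≤ s + t := by
      have hCl : IsClosed {pq : (X × Z) × (X × Z) |
          dist pq.1.2 pq.2.2 - dist pq.1.1 pq.2.1 ≤ s + t} := by
        apply isClosed_le _ continuous_const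
        apply Continuous.sub
        · exact (continuous_snd.comp continuous_fst).dist (continuous_snd.comp continuous_snd)
        · exact (continuous_fst.comp continuous_fst).dist (continuous_fst.comp continuous_snd)
      intro p hp q hq
      have hsub : (h '' T) ×ˢ (h '' T) ⊆ {pq : (X × Z) × (X × Z) |
          dist pq.1.2 pq.2.2 - dist pq.1.1 pq.2.1 ≤ s + t} := by
        rintro ⟨a, b⟩ ⟨ha, hb⟩
        exact himg a ha b hb
      have : (p, q) ∈ closure ((h '' T) ×ˢ (h '' T)) := by
        rw [closure_prod_eq]
        exact ⟨hp, hq⟩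
      exact (closure_mono hsub).trans hCl.closure_eq.subset this
    refine iSup₂_le fun p hp => iSup₂_le fun q hq => ?_
    exact ENNReal.ofReal_le_ofReal (hckey p hp q hq)
  · -- measure of the closure
    calc ENNReal.ofReal (1 - (s + t)) ≤ lam T := hTmeas
    _ ≤ lam (h ⁻¹' closure (h '' T)) := by
        apply measure_mono
        intro p hp
        exact subset_closure ⟨p, hp, rfl⟩
    _ = π (closure (h '' T)) := (Measure.map_apply hh isClosed_closure.measurableSet).symm
end
end

section
/- Let X, Y, Z be mm-spaces. Then □_≻(X, Z) ≤ □_≻(X, Y) + □_≻(Y, Z), where □_≻ is the unilateral box metric. -/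
open MeasureTheory Topology Filter Set Metric ENNReal

noncomputable section

/-!
Glue a coupling `π₁` of `μ, ν` and a coupling `π₂` of `ν, ρ` along `ν`, by disintegrating `π₂`
over `Y`; the `(X, Z)`-marginal of the glued measure couples `μ` and `ρ`. If `S₁, S₂` are the good
sets, the triangle inequality through `y` bounds the distortion of the composite relation
`S₁ ○ S₂` by `ε₁ + ε₂`, and a union bound gives it mass at least `1 - (ε₁ + ε₂)`. Adding
near-optimal errors and taking infima yields the triangle inequality for `ubox`.
-/

open ProbabilityTheory
open scoped SetRel Pointwise

namespace MeasureTheory.Measure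

variable {α β γ : Type*} [MeasurableSpace α] [MeasurableSpace β] [MeasurableSpace γ]

lemma map_compProd_comap (μ : Measure α) [SFinite μ] (κ : Kernel β γ) [IsSFiniteKernel κ]
    {f : α → β} (hf : Measurable f) :
    (μ ⊗ₘ κ.comap f hf).map (Prod.map f id) = μ.map f ⊗ₘ κ := by
  ext s hs
  rw [map_apply (hf.prodMap measurable_id) hs, compProd_apply (hf.prodMap measurable_id hs),
    compProd_apply hs, lintegral_map (Kernel.measurable_kernel_prodMk_left hs) hf]
  rfl

variable [StandardBorelSpace γ] [Nonempty γ]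

def glue (π₁ : Measure (α × β)) (π₂ : Measure (β × γ)) [IsFiniteMeasure π₂] :
    Measure ((α × β) × γ) :=
  π₁ ⊗ₘ π₂.condKernel.comap Prod.snd measurable_snd

variable (π₁ : Measure (α × β)) (π₂ : Measure (β × γ)) [IsFiniteMeasure π₂]

instance [IsProbabilityMeasure π₁] : IsProbabilityMeasure (glue π₁ π₂) := by
  unfold glue; infer_instance

lemma glue_map_fst [SFinite π₁] : (glue π₁ π₂).map Prod.fst = π₁ :=
  fst_compProd π₁ _

lemma glue_map_prodMap_snd [SFinite π₁] (h : π₁.map Prod.snd = π₂.map Prod.fst) :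
    (glue π₁ π₂).map (Prod.map Prod.snd id) = π₂ := by
  rw [glue, map_compProd_comap, h]
  exact π₂.disintegrate π₂.condKernel

end MeasureTheory.Measure

section Distortion

variable {X Y Z : Type*} [MetricSpace X] [MetricSpace Y] [MetricSpace Z]

lemma ofReal_le_disSucc {S : Set (X × Y)} {p q : X × Y} (hp : p ∈ S) (hq : q ∈ S) :
    ENNReal.ofReal (dist p.2 q.2 - dist p.1 q.1) ≤ disSucc S :=
  le_iSup₂_of_le p hp <|
    le_iSup₂_of_le (f := fun q (_ : q ∈ S) => ENNReal.ofReal (dist p.2 q.2 - dist p.1 q.1)) q hq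
      le_rfl

lemma disSucc_mono {S T : Set (X × Y)} (h : S ⊆ T) : disSucc S ≤ disSucc T :=
  iSup₂_le fun _ hp => iSup₂_le fun _ hq => ofReal_le_disSucc (h hp) (h hq)

lemma disSucc_closure (S : Set (X × Y)) : disSucc (closure S) = disSucc S := by
  refine le_antisymm (iSup₂_le fun p hp => iSup₂_le fun q hq => ?_) (disSucc_mono subset_closure)
  have hclosed : IsClosed {r : (X × Y) × (X × Y) |
      ENNReal.ofReal (dist r.1.2 r.2.2 - dist r.1.1 r.2.1) ≤ disSucc S} :=
    isClosed_le (ENNReal.continuous_ofReal.comp (by fun_prop)) continuous_const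
  have hS : S ×ˢ S ⊆ _ := fun r hr => ofReal_le_disSucc hr.1 hr.2
  have hpq : (p, q) ∈ closure (S ×ˢ S) := by rw [closure_prod_eq]; exact ⟨hp, hq⟩
  exact hclosed.closure_subset_iff.mpr hS hpq

lemma disSucc_comp_le (S₁ : Set (X × Y)) (S₂ : Set (Y × Z)) :
    disSucc (S₁ ○ S₂) ≤ disSucc S₁ + disSucc S₂ := by
  refine iSup₂_le fun ⟨x, z⟩ ⟨y, hxy, hyz⟩ => iSup₂_le fun ⟨x', z'⟩ ⟨y', hxy', hyz'⟩ => ?_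
  calc ENNReal.ofReal (dist z z' - dist x x')
      = ENNReal.ofReal ((dist y y' - dist x x') + (dist z z' - dist y y')) := by ring_nf
    _ ≤ ENNReal.ofReal (dist y y' - dist x x') + ENNReal.ofReal (dist z z' - dist y y') :=
      ENNReal.ofReal_add_le
    _ ≤ disSucc S₁ + disSucc S₂ := by
      gcongr
      · exact ofReal_le_disSucc (p := (x, y)) hxy hxy'
      · exact ofReal_le_disSucc (p := (y, z)) hyz hyz'

end Distortion

lemma MeasureTheory.ofReal_one_sub_add_le_measure_inter {Ω : Type*} [MeasurableSpace Ω]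
    {P : Measure Ω} [IsProbabilityMeasure P] {s t : Set Ω} (ht : MeasurableSet t) {a b : ℝ}
    (hs : ENNReal.ofReal (1 - a) ≤ P s) (ht' : ENNReal.ofReal (1 - b) ≤ P t) :
    ENNReal.ofReal (1 - (a + b)) ≤ P (s ∩ t) := by
  simp only [ENNReal.ofReal_le_iff_le_toReal (measure_ne_top _ _), ← measureReal_def] at hs ht' ⊢
  have hcover : P.real s ≤ P.real (s ∩ t) + P.real tᶜ :=
    (measureReal_mono fun x hx => (em (x ∈ t)).imp (⟨hx, ·⟩) id).trans (measureReal_union_le _ _)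
  rw [probReal_compl_eq_one_sub ht] at hcover
  linarith

section Coupling

variable {X Y Z : Type*} [MeasurableSpace X] [MeasurableSpace Y] [MeasurableSpace Z]

lemma IsCoupling.map_prodMap_fst {π : Measure ((X × Y) × Z)} {μ : Measure X} {ν : Measure Y}
    {ρ : Measure Z} (h₁ : IsCoupling (π.map Prod.fst) μ ν)
    (h₂ : IsCoupling (π.map (Prod.map Prod.snd id)) ν ρ) :
    IsCoupling (π.map (Prod.map Prod.fst id)) μ ρ := by
  obtain ⟨hprob, hμ, -⟩ := h₁
  obtain ⟨-, -, hρ⟩ := h₂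
  have : IsProbabilityMeasure π :=
    ⟨by simpa [Measure.map_apply measurable_fst MeasurableSet.univ] using hprob.measure_univ⟩
  refine ⟨Measure.isProbabilityMeasure_map (by fun_prop), ?_, ?_⟩
  · rw [← hμ, Measure.map_map measurable_fst (by fun_prop),
      Measure.map_map measurable_fst measurable_fst]
    rfl
  · rw [← hρ, Measure.map_map measurable_snd (by fun_prop),
      Measure.map_map measurable_snd (by fun_prop)]
    rfl

end Coupling

section Transitivity

variable {X Y Z : Type*} [MetricSpace X] [MeasurableSpace X] [BorelSpace X]
  [TopologicalSpace.SeparableSpace X] [MetricSpace Y] [MeasurableSpace Y] [BorelSpace Y]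
  [MetricSpace Z] [MeasurableSpace Z] [BorelSpace Z] [TopologicalSpace.SeparableSpace Z]
  [CompleteSpace Z]

lemma LipDomE.trans {μ : Measure X} {ν : Measure Y} {ρ : Measure Z} {ε₁ ε₂ : ℝ}
    (h₁ : LipDomE μ ν ε₁) (h₂ : LipDomE ν ρ ε₂) (hε₁ : 0 ≤ ε₁) (hε₂ : 0 ≤ ε₂) :
    LipDomE μ ρ (ε₁ + ε₂) := by
  obtain ⟨π₁, hπ₁, S₁, hS₁, hdis₁, hmass₁⟩ := h₁
  obtain ⟨π₂, hπ₂, S₂, hS₂, hdis₂, hmass₂⟩ := h₂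
  have := hπ₁.1
  have := hπ₂.1
  have : Nonempty Z := (nonempty_of_isProbabilityMeasure π₂).map Prod.snd
  set π := Measure.glue π₁ π₂
  have hfst : π.map Prod.fst = π₁ := Measure.glue_map_fst π₁ π₂
  have hsnd : π.map (Prod.map Prod.snd id) = π₂ :=
    Measure.glue_map_prodMap_snd π₁ π₂ (hπ₁.2.2.trans hπ₂.2.1.symm)
  refine ⟨π.map (Prod.map Prod.fst id), (hfst ▸ hπ₁).map_prodMap_fst (hsnd ▸ hπ₂),
    closure (S₁ ○ S₂), isClosed_closure, ?_, ?_⟩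
  · calc disSucc (closure (S₁ ○ S₂)) ≤ disSucc S₁ + disSucc S₂ :=
          (disSucc_closure _).trans_le (disSucc_comp_le S₁ S₂)
      _ ≤ ENNReal.ofReal ε₁ + ENNReal.ofReal ε₂ := add_le_add hdis₁ hdis₂
      _ = ENNReal.ofReal (ε₁ + ε₂) := (ENNReal.ofReal_add hε₁ hε₂).symm
  · rw [← hfst, Measure.map_apply measurable_fst hS₁.measurableSet] at hmass₁
    rw [← hsnd, Measure.map_apply (by fun_prop) hS₂.measurableSet] at hmass₂
    rw [Measure.map_apply (by fun_prop) isClosed_closure.measurableSet]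
    refine (ofReal_one_sub_add_le_measure_inter (hS₂.measurableSet.preimage (by fun_prop))
      hmass₁ hmass₂).trans (measure_mono ?_)
    rintro ⟨⟨x, y⟩, z⟩ ⟨hxy, hyz⟩
    exact subset_closure ⟨y, hxy, hyz⟩

end Transitivity

lemma lipDomE_one {X Y : Type*} [MetricSpace X] [MeasurableSpace X] [MetricSpace Y]
    [MeasurableSpace Y] (μ : Measure X) (ν : Measure Y) [IsProbabilityMeasure μ]
    [IsProbabilityMeasure ν] : LipDomE μ ν 1 :=
  ⟨μ.prod ν, ⟨inferInstance, Measure.fst_prod, Measure.snd_prod⟩, ∅, isClosed_empty,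
    by simp [disSucc], by simp⟩

theorem ubox_triangle_general {X Y Z : Type*} [MetricSpace X]
    [TopologicalSpace.SeparableSpace X] [MeasurableSpace X] [BorelSpace X]
    [MetricSpace Y] [MeasurableSpace Y] [BorelSpace Y]
    [MetricSpace Z] [CompleteSpace Z] [TopologicalSpace.SeparableSpace Z]
    [MeasurableSpace Z] [BorelSpace Z]
    (μ : Measure X) (ν : Measure Y) (ρ : Measure Z)
    [IsProbabilityMeasure μ] [IsProbabilityMeasure ν] [IsProbabilityMeasure ρ] :
    ubox μ ρ ≤ ubox μ ν + ubox ν ρ := by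
  set A := {ε : ℝ | 0 ≤ ε ∧ LipDomE μ ν ε}
  set B := {ε : ℝ | 0 ≤ ε ∧ LipDomE ν ρ ε}
  have hA : A.Nonempty := ⟨1, zero_le_one, lipDomE_one μ ν⟩
  have hB : B.Nonempty := ⟨1, zero_le_one, lipDomE_one ν ρ⟩
  have hAB : A + B ⊆ {ε : ℝ | 0 ≤ ε ∧ LipDomE μ ρ ε} := by
    rintro _ ⟨a, ⟨ha, hμν⟩, b, ⟨hb, hνρ⟩, rfl⟩
    exact ⟨add_nonneg ha hb, hμν.trans hνρ ha hb⟩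
  calc ubox μ ρ ≤ sInf (A + B) := csInf_le_csInf ⟨0, fun _ h => h.1⟩ (hA.add hB) hAB
    _ = ubox μ ν + ubox ν ρ := csInf_add hA ⟨0, fun _ h => h.1⟩ hB ⟨0, fun _ h => h.1⟩

/-- Triangle inequality for the unilateral box metric. -/
theorem ubox_triangle {X Y Z : Type*} [MetricSpace X] [CompleteSpace X]
    [TopologicalSpace.SeparableSpace X] [MeasurableSpace X] [BorelSpace X]
    [MetricSpace Y] [CompleteSpace Y] [TopologicalSpace.SeparableSpace Y]
    [MeasurableSpace Y] [BorelSpace Y]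
    [MetricSpace Z] [CompleteSpace Z] [TopologicalSpace.SeparableSpace Z]
    [MeasurableSpace Z] [BorelSpace Z]
    (μ : Measure X) (ν : Measure Y) (ρ : Measure Z)
    [IsProbabilityMeasure μ] [IsProbabilityMeasure ν] [IsProbabilityMeasure ρ] :
    ubox μ ρ ≤ ubox μ ν + ubox ν ρ :=
  ubox_triangle_general μ ν ρ
end
end

section
/- Let X, Y, X_n, Y_n (n = 1, 2, …) be mm-spaces such that □(X_n, X) → 0 and □(Y_n, Y) → 0 as n → ∞. Then □_≻(X, Y) ≤ liminf_{n→∞} □_≻(X_n, Y_n), i.e. the unilateral box metric is lower semicontinuous along □-convergent sequences. -/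
open MeasureTheory Topology Filter Set Metric ENNReal ProbabilityTheory

noncomputable section

lemma glue_couplings {A B C : Type*}
    [MeasurableSpace A] [MeasurableSpace B]
    [MeasurableSpace C] [StandardBorelSpace C] [Nonempty C]
    (p : Measure (A × B)) (q : Measure (A × C))
    [IsProbabilityMeasure p] [IsProbabilityMeasure q]
    (h : p.map Prod.fst = q.map Prod.fst) :
    ∃ m : Measure (A × B × C), IsProbabilityMeasure m ∧
      m.map (fun z => (z.1, z.2.1)) = p ∧ m.map (fun z => (z.1, z.2.2)) = q := by
  set κ := q.condKernel with hκ
  have hdis : q.fst ⊗ₘ κ = q := q.disintegrate _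
  set η : Kernel (A × B) C := κ.comap Prod.fst measurable_fst with hη
  have hηm : IsMarkovKernel η := by
    constructor
    intro ab
    rw [hη, Kernel.comap_apply]
    infer_instance
  set m0 : Measure ((A × B) × C) := p ⊗ₘ η with hm0
  have hmeas1 : Measurable (fun z : (A × B) × C => (z.1.1, z.1.2, z.2)) := by fun_prop
  refine ⟨m0.map (fun z => (z.1.1, z.1.2, z.2)), Measure.isProbabilityMeasure_map hmeas1.aemeasurable, ?_, ?_⟩
  · rw [Measure.map_map (by fun_prop) hmeas1]
    have : ((fun z : A × B × C => (z.1, z.2.1)) ∘ fun z : (A × B) × C => (z.1.1, z.1.2, z.2))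
        = Prod.fst := by ext z <;> rfl
    rw [this]
    exact Measure.fst_compProd p η
  · rw [Measure.map_map (by fun_prop) hmeas1]
    have hcomp : ((fun z : A × B × C => (z.1, z.2.2)) ∘ fun z : (A × B) × C => (z.1.1, z.1.2, z.2))
        = fun z : (A × B) × C => (z.1.1, z.2) := by ext z <;> rfl
    rw [hcomp]
    ext E hE
    rw [Measure.map_apply (by fun_prop) hE, Measure.compProd_apply ((by fun_prop : Measurable fun z : (A × B) × C => (z.1.1, z.2)) hE)]
    have hslice : ∀ ab : A × B, η ab (Prod.mk ab ⁻¹' ((fun z : (A × B) × C => (z.1.1, z.2)) ⁻¹' E))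
        = κ ab.1 (Prod.mk ab.1 ⁻¹' E) := by
      intro ab
      rw [hη, Kernel.comap_apply]
      rfl
    simp_rw [hslice]
    have hmf : Measurable (fun a : A => κ a (Prod.mk a ⁻¹' E)) :=
      Kernel.measurable_kernel_prodMk_left hE
    calc ∫⁻ ab : A × B, κ ab.1 (Prod.mk ab.1 ⁻¹' E) ∂p
        = ∫⁻ a, κ a (Prod.mk a ⁻¹' E) ∂(p.map Prod.fst) := by
          rw [lintegral_map hmf measurable_fst]
      _ = ∫⁻ a, κ a (Prod.mk a ⁻¹' E) ∂q.fst := by rw [h]; rfl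
      _ = (q.fst ⊗ₘ κ) E := (Measure.compProd_apply hE).symm
      _ = q E := by rw [hdis]

lemma compose_step {A B C : Type*}
    [MeasurableSpace A]
    [TopologicalSpace B] [MeasurableSpace B] [BorelSpace B] [SecondCountableTopology B]
    [TopologicalSpace C] [MeasurableSpace C] [BorelSpace C] [SecondCountableTopology C]
    [StandardBorelSpace C] [Nonempty C]
    (p : Measure (A × B)) (q : Measure (A × C))
    [IsProbabilityMeasure p] [IsProbabilityMeasure q]
    (h : p.map Prod.fst = q.map Prod.fst)
    (T : Set (A × B)) (hT : MeasurableSet T) (S : Set (A × C)) (hS : MeasurableSet S) :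
    ∃ r : Measure (B × C), IsProbabilityMeasure r ∧
      r.map Prod.fst = p.map Prod.snd ∧ r.map Prod.snd = q.map Prod.snd ∧
      r (closure {bc : B × C | ∃ a, (a, bc.1) ∈ T ∧ (a, bc.2) ∈ S})ᶜ ≤ p Tᶜ + q Sᶜ := by
  obtain ⟨m, hm, hm1, hm2⟩ := glue_couplings p q h
  refine ⟨m.map (fun z => z.2), Measure.isProbabilityMeasure_map measurable_snd.aemeasurable, ?_, ?_, ?_⟩
  · rw [Measure.map_map measurable_fst measurable_snd, ← hm1,
      Measure.map_map measurable_snd (by fun_prop)]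
    rfl
  · rw [Measure.map_map measurable_snd measurable_snd, ← hm2,
      Measure.map_map measurable_snd (by fun_prop)]
    rfl
  · set R := closure {bc : B × C | ∃ a, (a, bc.1) ∈ T ∧ (a, bc.2) ∈ S} with hR
    have hRm : MeasurableSet Rᶜ := isClosed_closure.measurableSet.compl
    rw [Measure.map_apply measurable_snd hRm]
    have hsub : (Prod.snd ⁻¹' Rᶜ : Set (A × B × C)) ⊆
        {z : A × B × C | (z.1, z.2.1) ∈ T ∧ (z.1, z.2.2) ∈ S}ᶜ := by
      intro z hz hzin
      exact hz (subset_closure ⟨z.1, hzin.1, hzin.2⟩)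
    calc m (Prod.snd ⁻¹' Rᶜ) ≤ m ({z : A × B × C | (z.1, z.2.1) ∈ T ∧ (z.1, z.2.2) ∈ S}ᶜ) :=
          measure_mono hsub
      _ ≤ m ((fun z : A × B × C => (z.1, z.2.1)) ⁻¹' Tᶜ) +
          m ((fun z : A × B × C => (z.1, z.2.2)) ⁻¹' Sᶜ) := by
          refine le_trans (measure_mono ?_) (measure_union_le _ _)
          intro z hz
          by_cases h1 : (z.1, z.2.1) ∈ T
          · exact Or.inr (fun h2 => hz ⟨h1, h2⟩)
          · exact Or.inl h1
      _ = p Tᶜ + q Sᶜ := by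
          rw [← Measure.map_apply (by fun_prop) hT.compl, ← Measure.map_apply (by fun_prop) hS.compl,
            hm1, hm2]

lemma myLeOnClosure {α : Type*} [TopologicalSpace α] {f : α × α → ℝ} (hf : Continuous f)
    {R : Set α} {ε : ℝ} (h : ∀ p ∈ R, ∀ q ∈ R, f (p, q) ≤ ε) :
    ∀ p ∈ closure R, ∀ q ∈ closure R, f (p, q) ≤ ε := by
  have key : closure R ×ˢ closure R ⊆ {x : α × α | f x ≤ ε} := by
    rw [← closure_prod_eq]
    exact closure_minimal (fun x hx => h _ hx.1 _ hx.2) (isClosed_le hf continuous_const)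
  exact fun p hp q hq => key ⟨hp, hq⟩

lemma myOfRealOneSub (t : ℝ) (ht : 0 ≤ t) :
    ENNReal.ofReal (1 - t) ≤ 1 - ENNReal.ofReal t := by
  rw [show (1:ℝ≥0∞) = ENNReal.ofReal 1 by norm_num, ← ENNReal.ofReal_sub 1 ht]

lemma myOneSubOfReal (t : ℝ) :
    (1 : ℝ≥0∞) - ENNReal.ofReal (1 - t) ≤ ENNReal.ofReal t := by
  refine tsub_le_iff_right.mpr ?_
  calc (1 : ℝ≥0∞) = ENNReal.ofReal (t + (1 - t)) := by norm_num
    _ ≤ ENNReal.ofReal t + ENNReal.ofReal (1 - t) := ENNReal.ofReal_add_le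

lemma myNonempty {X : Type*} [MeasurableSpace X] (μ : Measure X) [IsProbabilityMeasure μ] :
    Nonempty X := by
  by_contra h
  rw [not_nonempty_iff] at h
  have h1 : μ Set.univ = 1 := measure_univ
  rw [Set.univ_eq_empty_iff.mpr h] at h1
  simp at h1

lemma disSucc_point {X Y : Type*} [MetricSpace X] [MetricSpace Y] {S : Set (X × Y)} {ε : ℝ}
    (hε : 0 ≤ ε) (h : disSucc S ≤ ENNReal.ofReal ε) :
    ∀ p ∈ S, ∀ q ∈ S, dist p.2 q.2 - dist p.1 q.1 ≤ ε := by
  intro p hp q hq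
  have h1 : ENNReal.ofReal (dist p.2 q.2 - dist p.1 q.1) ≤ disSucc S := by
    rw [disSucc]
    exact le_iSup₂_of_le p hp (le_iSup₂_of_le q hq le_rfl)
  exact (ENNReal.ofReal_le_ofReal_iff hε).mp (h1.trans h)

lemma disBox_point {X Y : Type*} [MetricSpace X] [MetricSpace Y] {S : Set (X × Y)} {δ : ℝ}
    (hδ : 0 ≤ δ) (h : disBox S ≤ ENNReal.ofReal δ) :
    ∀ p ∈ S, ∀ q ∈ S, |dist p.1 q.1 - dist p.2 q.2| ≤ δ := by
  intro p hp q hq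
  have h1 : ENNReal.ofReal |dist p.1 q.1 - dist p.2 q.2| ≤ disBox S := by
    rw [disBox]
    exact le_iSup₂_of_le p hp (le_iSup₂_of_le q hq le_rfl)
  exact (ENNReal.ofReal_le_ofReal_iff hδ).mp (h1.trans h)

lemma lipDomE_transfer {X Y A B : Type*}
    [MetricSpace X] [CompleteSpace X] [TopologicalSpace.SeparableSpace X]
    [MeasurableSpace X] [BorelSpace X]
    [MetricSpace Y] [CompleteSpace Y] [TopologicalSpace.SeparableSpace Y]
    [MeasurableSpace Y] [BorelSpace Y]
    [MetricSpace A] [CompleteSpace A] [TopologicalSpace.SeparableSpace A]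
    [MeasurableSpace A] [BorelSpace A]
    [MetricSpace B] [CompleteSpace B] [TopologicalSpace.SeparableSpace B]
    [MeasurableSpace B] [BorelSpace B]
    (μ : Measure X) (ν : Measure Y) (α : Measure A) (β : Measure B)
    [IsProbabilityMeasure μ] [IsProbabilityMeasure ν]
    [IsProbabilityMeasure α] [IsProbabilityMeasure β]
    {ε δ : ℝ} (hε : 0 ≤ ε) (hδ : 0 ≤ δ)
    (h1 : LipDomE α β ε)
    (hx : boxDist α μ < ENNReal.ofReal δ)
    (hy : boxDist β ν < ENNReal.ofReal δ) :
    LipDomE μ ν (ε + 2*δ) := by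
  haveI : Nonempty X := myNonempty μ
  haveI : Nonempty B := myNonempty β
  obtain ⟨π₂, ⟨hπ₂p, hπ₂1, hπ₂2⟩, S, hScl, hSdis, hSmass⟩ := h1
  rw [boxDist] at hx hy
  simp only [iInf_lt_iff] at hx hy
  obtain ⟨T, hTcl, πx, hπx, hxlt⟩ := hx
  obtain ⟨T', hT'cl, πy, hπy, hylt⟩ := hy
  obtain ⟨hπxp, hπx1, hπx2⟩ := hπx
  obtain ⟨hπyp, hπy1, hπy2⟩ := hπy
  rw [max_lt_iff] at hxlt hylt
  haveI := hπ₂p; haveI := hπxp; haveI := hπyp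
  -- pointwise bounds
  have hTpt := disBox_point hδ hxlt.1.le
  have hT'pt := disBox_point hδ hylt.1.le
  have hSpt := disSucc_point hε hSdis
  -- complement mass bounds
  have hTc : πx Tᶜ ≤ ENNReal.ofReal δ := by
    rw [prob_compl_eq_one_sub hTcl.measurableSet]; exact hxlt.2.le
  have hT'c : πy T'ᶜ ≤ ENNReal.ofReal δ := by
    rw [prob_compl_eq_one_sub hT'cl.measurableSet]; exact hylt.2.le
  have hSc : π₂ Sᶜ ≤ ENNReal.ofReal ε := by
    rw [prob_compl_eq_one_sub hScl.measurableSet]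
    exact le_trans (tsub_le_tsub_left hSmass 1) (myOneSubOfReal ε)
  -- step 1: glue πx (A × X) and π₂ (A × B) over A
  obtain ⟨r₁, hr₁p, hr₁1, hr₁2, hr₁c⟩ :=
    compose_step πx π₂ (hπx1.trans hπ₂1.symm) T hTcl.measurableSet S hScl.measurableSet
  haveI := hr₁p
  set R1 : Set (X × B) := closure {bc : X × B | ∃ a, (a, bc.1) ∈ T ∧ (a, bc.2) ∈ S} with hR1
  have hR1pt : ∀ p ∈ R1, ∀ q ∈ R1, dist p.2 q.2 - dist p.1 q.1 ≤ ε + δ := by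
    apply myLeOnClosure (f := fun pq : (X × B) × (X × B) => dist pq.1.2 pq.2.2 - dist pq.1.1 pq.2.1)
      (by fun_prop)
    rintro ⟨x, b⟩ ⟨a, haT, haS⟩ ⟨x', b'⟩ ⟨a', ha'T, ha'S⟩
    have h2 := hSpt (a, b) haS (a', b') ha'S
    have h3 := hTpt (a, x) haT (a', x') ha'T
    simp only at h2 h3 ⊢
    rw [abs_le] at h3
    linarith [h2, h3.1, h3.2]
  -- step 2
  set q2 : Measure (B × X) := r₁.map Prod.swap with hq2
  haveI : IsProbabilityMeasure q2 := Measure.isProbabilityMeasure_map measurable_swap.aemeasurable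
  have hq2f : q2.map Prod.fst = β := by
    rw [hq2, Measure.map_map measurable_fst measurable_swap]
    have : (Prod.fst ∘ Prod.swap : X × B → B) = Prod.snd := rfl
    rw [this, hr₁2, hπ₂2]
  have hq2s : q2.map Prod.snd = μ := by
    rw [hq2, Measure.map_map measurable_snd measurable_swap]
    have : (Prod.snd ∘ Prod.swap : X × B → X) = Prod.fst := rfl
    rw [this, hr₁1, hπx2]
  have hS2m : MeasurableSet (Prod.swap ⁻¹' R1 : Set (B × X)) :=
    (isClosed_closure.preimage continuous_swap).measurableSet
  obtain ⟨r₂, hr₂p, hr₂1, hr₂2, hr₂c⟩ :=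
    compose_step πy q2 (hπy1.trans hq2f.symm) T' hT'cl.measurableSet
      (Prod.swap ⁻¹' R1) hS2m
  haveI := hr₂p
  have hq2c : q2 (Prod.swap ⁻¹' R1)ᶜ ≤ ENNReal.ofReal δ + ENNReal.ofReal ε := by
    rw [hq2, Measure.map_apply measurable_swap hS2m.compl]
    have : (Prod.swap ⁻¹' (Prod.swap ⁻¹' R1)ᶜ : Set (X × B)) = R1ᶜ := by
      rw [Set.preimage_compl, Set.preimage_preimage]
      simp
    rw [this]
    exact le_trans hr₁c (add_le_add hTc hSc)
  set R2 : Set (Y × X) :=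
    closure {bc : Y × X | ∃ a, (a, bc.1) ∈ T' ∧ (a, bc.2) ∈ Prod.swap ⁻¹' R1} with hR2
  have hR2mass : r₂ R2ᶜ ≤ ENNReal.ofReal (ε + 2*δ) := by
    refine le_trans hr₂c ?_
    refine le_trans (add_le_add hT'c hq2c) ?_
    calc ENNReal.ofReal δ + (ENNReal.ofReal δ + ENNReal.ofReal ε)
        = ENNReal.ofReal (δ + (δ + ε)) := by
          rw [ENNReal.ofReal_add hδ (by linarith : (0:ℝ) ≤ δ + ε), ENNReal.ofReal_add hδ hε]
      _ ≤ ENNReal.ofReal (ε + 2*δ) := ENNReal.ofReal_le_ofReal (by linarith)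
  have hR2pt : ∀ p ∈ R2, ∀ q ∈ R2, dist p.1 q.1 - dist p.2 q.2 ≤ ε + 2*δ := by
    apply myLeOnClosure (f := fun pq : (Y × X) × (Y × X) => dist pq.1.1 pq.2.1 - dist pq.1.2 pq.2.2)
      (by fun_prop)
    rintro ⟨y, x⟩ ⟨a, haT, haS⟩ ⟨y', x'⟩ ⟨a', ha'T, ha'S⟩
    have h2 := hR1pt (x, a) haS (x', a') ha'S
    have h3 := hT'pt (a, y) haT (a', y') ha'T
    simp only at h2 h3 ⊢
    rw [abs_le] at h3
    linarith [h2, h3.1, h3.2]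
  -- final coupling
  refine ⟨r₂.map Prod.swap, ⟨Measure.isProbabilityMeasure_map measurable_swap.aemeasurable, ?_, ?_⟩,
    Prod.swap ⁻¹' R2, isClosed_closure.preimage continuous_swap, ?_, ?_⟩
  · rw [Measure.map_map measurable_fst measurable_swap]
    have : (Prod.fst ∘ Prod.swap : Y × X → X) = Prod.snd := rfl
    rw [this, hr₂2, hq2s]
  · rw [Measure.map_map measurable_snd measurable_swap]
    have : (Prod.snd ∘ Prod.swap : Y × X → Y) = Prod.fst := rfl
    rw [this, hr₂1, hπy2]
  · rw [disSucc]
    refine iSup₂_le fun p hp => iSup₂_le fun q hq => ?_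
    apply ENNReal.ofReal_le_ofReal
    exact hR2pt _ hp _ hq
  · have hmeas : MeasurableSet (Prod.swap ⁻¹' R2 : Set (X × Y)) :=
      (isClosed_closure.preimage continuous_swap).measurableSet
    rw [Measure.map_apply measurable_swap hmeas]
    have heq : (Prod.swap ⁻¹' (Prod.swap ⁻¹' R2) : Set (Y × X)) = R2 := by
      rw [Set.preimage_preimage]; simp
    rw [heq]
    have h4 : (1 : ℝ≥0∞) - ENNReal.ofReal (ε + 2*δ) ≤ r₂ R2 := by
      have h5 : r₂ R2ᶜ = 1 - r₂ R2 := prob_compl_eq_one_sub isClosed_closure.measurableSet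
      have h6 : (1 : ℝ≥0∞) ≤ r₂ R2 + ENNReal.ofReal (ε + 2*δ) := by
        have := tsub_le_iff_right.mp (h5 ▸ hR2mass)
        rwa [add_comm] at this
      exact tsub_le_iff_right.mpr h6
    exact le_trans (myOfRealOneSub _ (by linarith)) h4

lemma myLipDomE_one {X Y : Type*} [MetricSpace X] [MetricSpace Y]
    [MeasurableSpace X] [MeasurableSpace Y]
    (μ : Measure X) (ν : Measure Y) [IsProbabilityMeasure μ] [IsProbabilityMeasure ν] :
    LipDomE μ ν 1 := by
  refine ⟨μ.prod ν, ⟨inferInstance, ?_, ?_⟩, ∅, isClosed_empty, ?_, ?_⟩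
  · exact Measure.fst_prod
  · exact Measure.snd_prod
  · simp [disSucc]
  · simp

lemma myUboxNonneg {X Y : Type*} [MetricSpace X] [MetricSpace Y]
    [MeasurableSpace X] [MeasurableSpace Y] (μ : Measure X) (ν : Measure Y) :
    0 ≤ ubox μ ν :=
  Real.sInf_nonneg (fun _ hx => hx.1)

lemma myUboxLeOne {X Y : Type*} [MetricSpace X] [MetricSpace Y]
    [MeasurableSpace X] [MeasurableSpace Y] (μ : Measure X) (ν : Measure Y)
    [IsProbabilityMeasure μ] [IsProbabilityMeasure ν] :
    ubox μ ν ≤ 1 :=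
  csInf_le ⟨0, fun _ hx => hx.1⟩ ⟨zero_le_one, myLipDomE_one μ ν⟩

/-- Lower semicontinuity of the unilateral box metric along
box-convergent sequences. -/
theorem ubox_lowerSemicontinuous {X Y : Type*} [MetricSpace X] [CompleteSpace X]
    [TopologicalSpace.SeparableSpace X] [MeasurableSpace X] [BorelSpace X]
    [MetricSpace Y] [CompleteSpace Y] [TopologicalSpace.SeparableSpace Y]
    [MeasurableSpace Y] [BorelSpace Y]
    (μ : Measure X) (ν : Measure Y) [IsProbabilityMeasure μ] [IsProbabilityMeasure ν] {Xn Yn : ℕ → Type*}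
    [∀ n, MetricSpace (Xn n)] [∀ n, CompleteSpace (Xn n)]
    [∀ n, TopologicalSpace.SeparableSpace (Xn n)]
    [∀ n, MeasurableSpace (Xn n)] [∀ n, BorelSpace (Xn n)]
    [∀ n, MetricSpace (Yn n)] [∀ n, CompleteSpace (Yn n)]
    [∀ n, TopologicalSpace.SeparableSpace (Yn n)]
    [∀ n, MeasurableSpace (Yn n)] [∀ n, BorelSpace (Yn n)]
    (μn : ∀ n, Measure (Xn n)) (νn : ∀ n, Measure (Yn n))
    [∀ n, IsProbabilityMeasure (μn n)] [∀ n, IsProbabilityMeasure (νn n)]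
    (hX : Tendsto (fun n => boxDist (μn n) μ) atTop (𝓝 0))
    (hY : Tendsto (fun n => boxDist (νn n) ν) atTop (𝓝 0)) :
    ubox μ ν ≤ liminf (fun n => ubox (μn n) (νn n)) atTop := by
  set L := liminf (fun n => ubox (μn n) (νn n)) atTop with hL
  refine le_of_forall_pos_le_add ?_
  intro c hc
  have hc4 : (0:ℝ) < c/4 := by linarith
  have hfreq : ∃ᶠ n in atTop, ubox (μn n) (νn n) < L + c/4 := by
    apply Filter.frequently_lt_of_liminf_lt
    · refine Filter.IsBoundedUnder.isCoboundedUnder_ge ?_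
      exact ⟨1, Filter.eventually_map.mpr (Filter.Eventually.of_forall fun n =>
        myUboxLeOne (μn n) (νn n))⟩
    · rw [← hL]; linarith
  have hev1 : ∀ᶠ n in atTop, boxDist (μn n) μ < ENNReal.ofReal (c/4) :=
    hX.eventually_lt_const (by simp [ENNReal.ofReal_pos, hc4])
  have hev2 : ∀ᶠ n in atTop, boxDist (νn n) ν < ENNReal.ofReal (c/4) :=
    hY.eventually_lt_const (by simp [ENNReal.ofReal_pos, hc4])
  obtain ⟨n, hn1, hn2, hn3⟩ := (hfreq.and_eventually (hev1.and hev2)).exists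
  -- extract ε
  have hne : {ε : ℝ | 0 ≤ ε ∧ LipDomE (μn n) (νn n) ε}.Nonempty :=
    ⟨1, zero_le_one, myLipDomE_one _ _⟩
  have hsinf : sInf {ε : ℝ | 0 ≤ ε ∧ LipDomE (μn n) (νn n) ε} < L + c/4 := hn1
  obtain ⟨ε, ⟨hε0, hεdom⟩, hεlt⟩ := exists_lt_of_csInf_lt hne hsinf
  have htrans := lipDomE_transfer μ ν (μn n) (νn n) hε0 hc4.le hεdom hn2 hn3
  have hub : ubox μ ν ≤ ε + 2*(c/4) :=
    csInf_le ⟨0, fun _ hx => hx.1⟩ ⟨by linarith, htrans⟩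
  linarith
end
end

section
/- Let X be a complete separable metric space, S and S_n (n = 1, 2, …) closed subsets of X, and μ, μ_n Borel probability measures on X. If μ_n converges weakly to μ and S_n converges to S in the weak Hausdorff sense, then μ(S) ≥ limsup_{n→∞} μ_n(S_n). -/
open MeasureTheory Topology Filter Set Metric ENNReal

noncomputable section

/-- Weak Hausdorff (Kuratowski–Painlevé) convergence of closed sets. -/
def WeakHausdorffConv {Z : Type*} [MetricSpace Z] (Sn : ℕ → Set Z) (S : Set Z) : Prop :=
  (∀ x ∈ S, Tendsto (fun n => EMetric.infEdist x (Sn n)) atTop (𝓝 0)) ∧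
  (∀ x ∉ S, 0 < liminf (fun n => EMetric.infEdist x (Sn n)) atTop)

/-- If `μ_n → μ` weakly and `S_n → S` weak Hausdorff, then
`μ(S) ≥ limsup μ_n(S_n)`. -/
theorem limsup_measure_le_of_weakHausdorff {X : Type*} [MetricSpace X]
    [CompleteSpace X] [TopologicalSpace.SeparableSpace X]
    [MeasurableSpace X] [BorelSpace X]
    (S : Set X) (Sn : ℕ → Set X) (hS : IsClosed S) (hSn : ∀ n, IsClosed (Sn n))
    (μ : ProbabilityMeasure X) (μn : ℕ → ProbabilityMeasure X)
    (hμ : Tendsto μn atTop (𝓝 μ))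
    (hWH : WeakHausdorffConv Sn S) :
    limsup (fun n => (μn n : Measure X) (Sn n)) atTop ≤ (μ : Measure X) S := by
  set T : ℕ → ℕ → Set X :=
    fun N k => ⋂ n ∈ Set.Ici N, {x | ((k : ℝ≥0∞) + 1)⁻¹ ≤ EMetric.infEdist x (Sn n)} with hT
  have hofReal : ∀ k : ℕ, ENNReal.ofReal ((k : ℝ) + 1)⁻¹ = ((k : ℝ≥0∞) + 1)⁻¹ := by
    intro k
    rw [ENNReal.ofReal_inv_of_pos (by positivity),
      show ((k : ℝ) + 1) = ((k + 1 : ℕ) : ℝ) by push_cast; ring, ENNReal.ofReal_natCast]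
    push_cast
    ring
  set U : ℕ → Set X :=
    fun m => ⋃ N ∈ Set.Iic m, ⋃ k ∈ Set.Iic m,
      Metric.thickening ((k : ℝ) + 1)⁻¹ (T N k) with hU
  have hUopen : ∀ m, IsOpen (U m) := fun m =>
    isOpen_biUnion fun _ _ => isOpen_biUnion fun _ _ => isOpen_thickening
  -- Sn n avoids U m for n ≥ m
  have hdisj : ∀ m n, m ≤ n → Sn n ⊆ (U m)ᶜ := by
    intro m n hmn x hx hxU
    simp only [hU, mem_iUnion, Set.mem_Iic] at hxU
    obtain ⟨N, hNm, k, hkm, hxt⟩ := hxU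
    rw [Metric.mem_thickening_iff_exists_edist_lt] at hxt
    obtain ⟨y, hyT, hxy⟩ := hxt
    have h1 : ((k : ℝ≥0∞) + 1)⁻¹ ≤ EMetric.infEdist y (Sn n) := by
      have := Set.mem_iInter₂.1 hyT n (le_trans hNm hmn)
      exact this
    have h2 : EMetric.infEdist y (Sn n) ≤ edist x y := by
      rw [edist_comm]
      exact EMetric.infEdist_le_edist_of_mem hx
    rw [hofReal] at hxy
    exact absurd (h1.trans_lt (h2.trans_lt hxy)) (lt_irrefl _)
  -- complement of S is covered by the U m
  have hcover : Sᶜ ⊆ ⋃ m, U m := by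
    intro x hx
    have hpos := hWH.2 x hx
    obtain ⟨j, hj⟩ := ENNReal.exists_inv_nat_lt hpos.ne'
    have hj' : ((j : ℝ≥0∞) + 1)⁻¹ < liminf (fun n => EMetric.infEdist x (Sn n)) atTop :=
      lt_of_le_of_lt (ENNReal.inv_le_inv.2 (le_add_of_nonneg_right zero_le_one)) hj
    have hev := Filter.eventually_lt_of_lt_liminf hj'
    obtain ⟨N, hN⟩ := hev.exists_forall_of_atTop
    have hxT : x ∈ T N j := Set.mem_iInter₂.2 fun n hn => (hN n hn).le
    have : x ∈ Metric.thickening ((j : ℝ) + 1)⁻¹ (T N j) :=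
      Metric.self_subset_thickening (by positivity) _ hxT
    exact Set.mem_iUnion.2 ⟨max N j, Set.mem_biUnion (Set.mem_Iic.2 (le_max_left _ _))
      (Set.mem_biUnion (Set.mem_Iic.2 (le_max_right _ _)) this)⟩
  have hInt : (⋂ m, (U m)ᶜ) ⊆ S := by
    intro x hx
    by_contra hxS
    obtain ⟨m, hm⟩ := Set.mem_iUnion.1 (hcover hxS)
    exact (Set.mem_iInter.1 hx m) hm
  have key : ∀ m, limsup (fun n => (μn n : Measure X) (Sn n)) atTop
      ≤ (μ : Measure X) ((U m)ᶜ) := by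
    intro m
    have h1 : ∀ᶠ n in atTop, (μn n : Measure X) (Sn n) ≤ (μn n : Measure X) ((U m)ᶜ) :=
      Filter.eventually_atTop.2 ⟨m, fun n hn => measure_mono (hdisj m n hn)⟩
    refine (Filter.limsup_le_limsup h1).trans ?_
    exact ProbabilityMeasure.limsup_measure_closed_le_of_tendsto hμ (hUopen m).isClosed_compl
  have hanti : Antitone (fun m => (U m)ᶜ) := by
    intro a b hab
    apply Set.compl_subset_compl.2
    refine Set.iUnion₂_mono' fun N hN => ⟨N, Set.Iic_subset_Iic.2 hab hN, ?_⟩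
    exact Set.iUnion₂_mono' fun k hk => ⟨k, Set.Iic_subset_Iic.2 hab hk, subset_rfl⟩
  have htend : Tendsto (fun m => (μ : Measure X) ((U m)ᶜ)) atTop
      (𝓝 ((μ : Measure X) (⋂ m, (U m)ᶜ))) :=
    tendsto_measure_iInter_atTop
      (fun m => ((hUopen m).isClosed_compl.measurableSet).nullMeasurableSet)
      hanti ⟨0, measure_ne_top _ _⟩
  exact (ge_of_tendsto' htend key).trans (measure_mono hInt)
end
end

section
/- Let X and Y be metric spaces and equip X × Y with the l¹-metric. Let S and S_n (n = 1, 2, …) be closed subsets of X × Y. If S_n converges weakly (in the weak Hausdorff sense) to S as n → ∞, then dis_≻ S ≤ liminf_{n→∞} dis_≻ S_n. -/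
open MeasureTheory Topology Filter Set Metric ENNReal

noncomputable section

/-- Distance from a point to a set with respect to the `l¹`-metric on `X × Y`
(`⊤` for the empty set). -/
def l1InfEdist {X Y : Type*} [MetricSpace X] [MetricSpace Y]
    (p : X × Y) (S : Set (X × Y)) : ℝ≥0∞ :=
  ⨅ q ∈ S, (edist p.1 q.1 + edist p.2 q.2)

/-!
By condition (1) of weak convergence, every pair `p, q ∈ S` is approximated, for large `n`, by a
pair `r, s ∈ S_n` within `l¹`-distance `δ`, and the pair distortion `d_Y(y,y') − d_X(x,x')` is
`1`-Lipschitz in each point for the `l¹`-metric. So each term of the supremum defining `dis_≻ S`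
is, up to `2δ`, below `dis_≻ S_n` for all large `n`; then let `δ → 0`.
-/

section

variable {X Y : Type*} [MetricSpace X] [MetricSpace Y]

theorem exists_mem_edist_add_edist_lt_of_l1InfEdist_lt {p : X × Y} {T : Set (X × Y)}
    {ε : ℝ≥0∞} (h : l1InfEdist p T < ε) :
    ∃ r ∈ T, edist p.1 r.1 + edist p.2 r.2 < ε := by
  simpa only [l1InfEdist, iInf_lt_iff, exists_prop] using h

theorem dist_sub_dist_le_dist_sub_dist_add (p q r s : X × Y) :
    dist p.2 q.2 - dist p.1 q.1 ≤ dist r.2 s.2 - dist r.1 s.1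
      + (dist p.1 r.1 + dist p.2 r.2) + (dist q.1 s.1 + dist q.2 s.2) := by
  linarith [dist_triangle4 p.2 r.2 s.2 q.2, dist_triangle4 r.1 p.1 q.1 s.1, dist_comm q.2 s.2,
    dist_comm r.1 p.1]

theorem ofReal_dist_sub_dist_le_disSucc {T : Set (X × Y)} {r s : X × Y} (hr : r ∈ T)
    (hs : s ∈ T) : ENNReal.ofReal (dist r.2 s.2 - dist r.1 s.1) ≤ disSucc T :=
  le_iSup₂_of_le r hr (le_iSup₂_of_le s hs le_rfl)

theorem ofReal_dist_sub_dist_sub_le_disSucc {T : Set (X × Y)} {p q : X × Y} {δ : ℝ}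
    (hp : l1InfEdist p T < ENNReal.ofReal δ) (hq : l1InfEdist q T < ENNReal.ofReal δ) :
    ENNReal.ofReal (dist p.2 q.2 - dist p.1 q.1 - 2 * δ) ≤ disSucc T := by
  obtain ⟨r, hr, hpr⟩ := exists_mem_edist_add_edist_lt_of_l1InfEdist_lt hp
  obtain ⟨s, hs, hqs⟩ := exists_mem_edist_add_edist_lt_of_l1InfEdist_lt hq
  rw [edist_dist, edist_dist, ← ENNReal.ofReal_add dist_nonneg dist_nonneg,
    ENNReal.ofReal_lt_ofReal_iff'] at hpr hqs
  refine le_trans (ENNReal.ofReal_le_ofReal ?_) (ofReal_dist_sub_dist_le_disSucc hr hs)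
  linarith [dist_sub_dist_le_dist_sub_dist_add p q r s]

end

theorem disSucc_le_liminf_of_weakHausdorff_general {X Y : Type*} [MetricSpace X] [MetricSpace Y]
    (S : Set (X × Y)) (Sn : ℕ → Set (X × Y))
    (h1 : ∀ p ∈ S, Tendsto (fun n => l1InfEdist p (Sn n)) atTop (𝓝 0)) :
    disSucc S ≤ liminf (fun n => disSucc (Sn n)) atTop := by
  refine iSup₂_le fun p hp => iSup₂_le fun q hq => ?_
  set c := dist p.2 q.2 - dist p.1 q.1
  have approx : ∀ δ > 0, ENNReal.ofReal (c - 2 * δ) ≤ liminf (fun n => disSucc (Sn n)) atTop := by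
    intro δ hδ
    have hδ' : (0 : ℝ≥0∞) < ENNReal.ofReal δ := ENNReal.ofReal_pos.2 hδ
    refine le_liminf_of_le (by isBoundedDefault) ?_
    filter_upwards [(h1 p hp).eventually_lt_const hδ', (h1 q hq).eventually_lt_const hδ']
      with n hpn hqn
    exact ofReal_dist_sub_dist_sub_le_disSucc hpn hqn
  have hlim : Tendsto (fun δ : ℝ => ENNReal.ofReal (c - 2 * δ)) (𝓝[>] 0) (𝓝 (ENNReal.ofReal c)) :=
    ((ENNReal.continuous_ofReal.comp (by fun_prop)).tendsto' 0 _ (by simp)).mono_left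
      nhdsWithin_le_nhds
  exact le_of_tendsto hlim (eventually_nhdsWithin_of_forall approx)

/-- If closed sets `S_n` converge weakly (weak Hausdorff sense,
w.r.t. the `l¹`-metric on `X × Y`) to `S`, then `dis_≻ S ≤ liminf dis_≻ S_n`. -/
theorem disSucc_le_liminf_of_weakHausdorff {X Y : Type*} [MetricSpace X] [MetricSpace Y]
    (S : Set (X × Y)) (Sn : ℕ → Set (X × Y))
    (hS : IsClosed S) (hSn : ∀ n, IsClosed (Sn n))
    (h1 : ∀ p ∈ S, Tendsto (fun n => l1InfEdist p (Sn n)) atTop (𝓝 0))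
    (h2 : ∀ p ∉ S, 0 < liminf (fun n => l1InfEdist p (Sn n)) atTop) :
    disSucc S ≤ liminf (fun n => disSucc (Sn n)) atTop :=
  disSucc_le_liminf_of_weakHausdorff_general S Sn h1
end
end

section
/- Let X, Y, Z be mm-spaces and ε₁, ε₂ ≥ 0. Suppose f : supp m_X → supp m_Y is Borel measurable and 1-Lipschitz up to ε₁ with d_P(f_* m_X, m_Y) ≤ ε₁, and g : supp m_Y → supp m_Z is Borel measurable and 1-Lipschitz up to ε₂ with d_P(g_* m_Y, m_Z) ≤ ε₂. Then for every s > 0 there exists a Borel measurable map h : supp m_X → supp m_Z that is 1-Lipschitz up to 3(ε₁ + ε₂) + s and satisfies d_P(h_* m_X, m_Z) ≤ 6(ε₁ + ε₂) + s. -/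
open MeasureTheory Topology Filter Set Metric ENNReal

noncomputable section

/-!
Before applying `g`, move each point of `supp m_Y` to a nearby point of the good set `Y₀` of `g`.
A dense sequence in `Y₀` makes this choice measurable while moving every point of the
`t`-neighbourhood of `Y₀` by less than `t + η`, and for `t > ε₁` the Prokhorov bound on `f` says
that `f` sends all of `m_X` but mass `ε₂ + t` into that neighbourhood. The detour costs
`2(t + η)` in the Lipschitz error. For the Prokhorov estimate, a Borel set `A ⊆ Z` is pulled back
by `g`, cut down to `Y₀` (losing `ε₂`) and pulled back by `f` (losing `t`); the detour enlarges
the neighbourhood of `A` by `2t + η + ε₂`.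
-/

lemma msupport_eq_support_s18 {X : Type*} [TopologicalSpace X] [MeasurableSpace X] (μ : Measure X) :
    msupport μ = μ.support := by
  ext x
  simp only [msupport, Measure.support_eq_forall_isOpen, mem_ofPred_eq]
  exact forall_congr' fun U => ⟨fun h hx hU => h hU hx, fun h hU hx => h hx hU⟩

lemma measurableSet_msupport {X : Type*} [TopologicalSpace X] [MeasurableSpace X]
    [OpensMeasurableSpace X] (μ : Measure X) : MeasurableSet (msupport μ) :=
  msupport_eq_support_s18 μ ▸ Measure.isClosed_support.measurableSet

instance isProbabilityMeasure_comap_msupport {X : Type*} [TopologicalSpace X] [MeasurableSpace X]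
    [OpensMeasurableSpace X] [HereditarilyLindelofSpace X] (μ : Measure X)
    [IsProbabilityMeasure μ] :
    IsProbabilityMeasure (Measure.comap ((↑) : msupport μ → X) μ) :=
  (MeasurableEmbedding.subtype_coe (measurableSet_msupport μ)).isProbabilityMeasure_comap <| by
    simpa [msupport_eq_support_s18] using Measure.support_mem_ae

lemma ofReal_one_sub_le_iff_measure_compl_le {X : Type*} [MeasurableSpace X] {μ : Measure X}
    [IsProbabilityMeasure μ] {A : Set X} (hA : MeasurableSet A) {ε : ℝ} (hε : 0 ≤ ε) :
    ENNReal.ofReal (1 - ε) ≤ μ A ↔ μ Aᶜ ≤ ENNReal.ofReal ε := by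
  rw [prob_compl_eq_one_sub hA, ENNReal.ofReal_sub _ hε, ENNReal.ofReal_one, tsub_le_iff_right,
    tsub_le_iff_right, add_comm]

lemma Isometry.preimage_thickening_image {T Y : Type*} [PseudoMetricSpace T] [PseudoMetricSpace Y]
    {i : T → Y} (hi : Isometry i) (ε : ℝ) (A : Set T) :
    i ⁻¹' thickening ε (i '' A) = thickening ε A := by
  ext x
  simp only [mem_preimage, mem_thickening_iff_infEDist_lt, infEDist_image hi]

section Prokhorov

variable {Y : Type*} [PseudoMetricSpace Y] [MeasurableSpace Y]

/-- The condition on `ε` in the infimum defining `prokDist μ ν`. -/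
def ProkhorovBound (μ ν : Measure Y) (ε : ℝ) : Prop :=
  ∀ A : Set Y, MeasurableSet A → ν A ≤ μ (thickening ε A) + ENNReal.ofReal ε

variable {μ ν : Measure Y} {ε ε' : ℝ}

lemma ProkhorovBound.mono (h : ProkhorovBound μ ν ε) (hε : ε ≤ ε') : ProkhorovBound μ ν ε' :=
  fun A hA => (h A hA).trans <|
    add_le_add (measure_mono (thickening_mono hε A)) (ENNReal.ofReal_le_ofReal hε)

lemma ProkhorovBound.comap_isometry {T : Type*} [PseudoMetricSpace T] [MeasurableSpace T]
    {i : T → Y} (hi : Isometry i) (hi' : MeasurableEmbedding i) {α : Measure T}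
    (h : ProkhorovBound (α.map i) ν ε) : ProkhorovBound α (ν.comap i) ε := by
  intro A hA
  rw [hi'.comap_apply, ← hi.preimage_thickening_image, ← hi'.map_apply]
  exact h _ (hi'.measurableSet_image.2 hA)

end Prokhorov

section ProkDist

variable {Y : Type*} [MetricSpace Y] [MeasurableSpace Y] {μ ν : Measure Y}

lemma prokhorovBound_of_prokDist_lt [IsFiniteMeasure ν] {t : ℝ} (h : prokDist μ ν < t) :
    ProkhorovBound μ ν t := by
  have hbdd : BddBelow {ε : ℝ | 0 < ε ∧ ProkhorovBound μ ν ε} := ⟨0, fun _ hε => hε.1.le⟩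
  have hne : {ε : ℝ | 0 < ε ∧ ProkhorovBound μ ν ε}.Nonempty := by
    refine ⟨(ν univ).toReal + 1, by positivity, fun A _ => ?_⟩
    calc ν A ≤ ν univ := measure_mono (subset_univ A)
      _ ≤ ENNReal.ofReal ((ν univ).toReal + 1) := by
        rw [ENNReal.ofReal_add ENNReal.toReal_nonneg zero_le_one,
          ENNReal.ofReal_toReal (measure_ne_top ν univ)]
        exact le_self_add
      _ ≤ _ := le_add_self
  obtain ⟨ε, ⟨-, hε⟩, hεt⟩ := (csInf_lt_iff hbdd hne).1 h
  exact hε.mono hεt.le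

lemma prokDist_le_of_forall_lt {b : ℝ} (h : ∀ t, b < t → ProkhorovBound μ ν t) (hb : 0 ≤ b) :
    prokDist μ ν ≤ b :=
  le_of_forall_gt_imp_ge_of_dense fun t ht =>
    csInf_le ⟨0, fun _ hε => hε.1.le⟩ ⟨hb.trans_lt ht, h t ht⟩

end ProkDist

lemma exists_measurable_near_map {Y : Type*} [PseudoMetricSpace Y] [SecondCountableTopology Y]
    [MeasurableSpace Y] [OpensMeasurableSpace Y] (S : Set Y) {ε δ : ℝ} (hδ : 0 < δ) :
    ∃ φ : Y → Y, Measurable φ ∧ ∀ y ∈ thickening ε S, φ y ∈ S ∧ dist y (φ y) < ε + δ := by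
  rcases S.eq_empty_or_nonempty with rfl | hS
  · exact ⟨id, measurable_id, by simp⟩
  have : Nonempty S := hS.to_subtype
  set e := TopologicalSpace.denseSeq S
  set U := ⋃ m, ball (e m : Y) (ε + δ)
  -- first index of a point of the sequence within `ε + δ`, and `0` if there is none
  have hex : ∀ y, ∃ n, y ∈ ball (e n : Y) (ε + δ) ∨ y ∉ U := by
    intro y
    by_cases hy : y ∈ U
    · obtain ⟨n, hn⟩ := mem_iUnion.1 hy
      exact ⟨n, .inl hn⟩
    · exact ⟨0, .inr hy⟩
  classical
  refine ⟨fun y => e (Nat.find (hex y)), ?_, fun y hy => ⟨(e _).2, ?_⟩⟩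
  · refine measurable_subtype_coe.comp
      (Measurable.find (fun n => measurable_const) (fun n => ?_) hex)
    exact measurableSet_ball.union (MeasurableSet.iUnion fun m => measurableSet_ball).compl
  · obtain ⟨s, hs, hys⟩ := mem_thickening_iff.1 hy
    obtain ⟨n, hn⟩ :=
      Metric.denseRange_iff.1 (TopologicalSpace.denseRange_denseSeq S) ⟨s, hs⟩ δ hδ
    have hyU : y ∈ U := mem_iUnion.2 ⟨n, mem_ball.2 <|
      (dist_triangle y s (e n)).trans_lt (add_lt_add hys hn)⟩
    exact (Nat.find_spec (hex y)).resolve_right (not_not.2 hyU)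

section LipUpToOn

variable {X Y Z : Type*} [PseudoMetricSpace X] [PseudoMetricSpace Y] [PseudoMetricSpace Z]

def LipUpToOn (f : X → Y) (ε : ℝ) (s : Set X) : Prop :=
  ∀ ⦃x⦄, x ∈ s → ∀ ⦃x'⦄, x' ∈ s → dist (f x) (f x') ≤ dist x x' + ε

variable {f : X → Y} {g : Y → Z} {s : Set X} {t : Set Y} {a b : ℝ}

lemma LipUpToOn.mono (h : LipUpToOn f a s) (hab : a ≤ b) : LipUpToOn f b s :=
  fun _ hx _ hx' => (h hx hx').trans (by linarith)

lemma LipUpToOn.comp (hg : LipUpToOn g b t) (hf : LipUpToOn f a s) (hst : MapsTo f s t) :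
    LipUpToOn (g ∘ f) (a + b) s :=
  fun x hx x' hx' => (hg (hst hx) (hst hx')).trans (by linarith [hf hx hx'])

lemma lipUpToOn_of_dist_lt {φ : X → X} {r : ℝ} (h : ∀ x ∈ s, dist x (φ x) < r) :
    LipUpToOn φ (2 * r) s := fun x hx x' hx' => by
  have := dist_triangle4 (φ x) x x' (φ x')
  rw [dist_comm (φ x) x] at this
  linarith [h x hx, h x' hx']

end LipUpToOn

lemma lipUpTo_iff {X Y : Type*} [MetricSpace X] [MeasurableSpace X] [OpensMeasurableSpace X]
    [HereditarilyLindelofSpace X] [MetricSpace Y] [MeasurableSpace Y] {μ : Measure X}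
    [IsProbabilityMeasure μ] {ν : Measure Y} {f : msupport μ → msupport ν} {ε : ℝ} (hε : 0 ≤ ε) :
    LipUpTo μ ν f ε ↔ ∃ W : Set (msupport μ), MeasurableSet W ∧
      Measure.comap Subtype.val μ Wᶜ ≤ ENNReal.ofReal ε ∧ LipUpToOn f ε W := by
  have hemb := MeasurableEmbedding.subtype_coe (measurableSet_msupport μ)
  constructor
  · rintro ⟨X₀, hX₀, hX₀sub, hX₀μ, hlip⟩
    refine ⟨Subtype.val ⁻¹' X₀, measurable_subtype_coe hX₀, ?_,
      fun x hx x' hx' => hlip x x' hx hx'⟩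
    rw [← ofReal_one_sub_le_iff_measure_compl_le (measurable_subtype_coe hX₀) hε,
      hemb.comap_apply, image_preimage_eq_of_subset (by rwa [Subtype.range_coe])]
    exact hX₀μ
  · rintro ⟨W, hW, hWc, hlip⟩
    refine ⟨Subtype.val '' W, hemb.measurableSet_image' hW, fun _ ⟨x, _, hx⟩ => hx ▸ x.2, ?_,
      fun x x' hx hx' => hlip (Subtype.val_injective.mem_set_image.1 hx)
        (Subtype.val_injective.mem_set_image.1 hx')⟩
    rw [← hemb.comap_apply]
    exact (ofReal_one_sub_le_iff_measure_compl_le hW hε).2 hWc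

section Composition

variable {X Y Z : Type*} [MeasurableSpace X]
  [PseudoMetricSpace Y] [MeasurableSpace Y] [PseudoMetricSpace Z]
  {α : Measure X} {ν : Measure Y} {F : X → Y} {G : Y → Z} {φ : Y → Y}
  {V : Set Y} {ε₂ t₁ t₂ r : ℝ}

lemma ProkhorovBound.measure_compl_preimage_thickening_le [OpensMeasurableSpace Y]
    [IsProbabilityMeasure α]
    [IsProbabilityMeasure ν] (h : ProkhorovBound (α.map F) ν t₁) (hF : Measurable F)
    (hV : MeasurableSet V) (hVc : ν Vᶜ ≤ ENNReal.ofReal ε₂) :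
    α (F ⁻¹' thickening t₁ V)ᶜ ≤ ENNReal.ofReal t₁ + ENNReal.ofReal ε₂ := by
  have hthick : MeasurableSet (thickening t₁ V) := isOpen_thickening.measurableSet
  rw [prob_compl_eq_one_sub (hF hthick), tsub_le_iff_left, ← add_assoc]
  calc (1 : ℝ≥0∞) = ν V + ν Vᶜ := by rw [measure_add_measure_compl hV, measure_univ]
    _ ≤ α (F ⁻¹' thickening t₁ V) + ENNReal.ofReal t₁ + ENNReal.ofReal ε₂ := by
      rw [← Measure.map_apply hF hthick]
      exact add_le_add (h V hV) hVc

lemma exists_lipUpToOn_comp_near_map [PseudoMetricSpace X] [OpensMeasurableSpace Y]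
    [IsProbabilityMeasure α] [IsProbabilityMeasure ν]
    {W : Set X} {ε₁ : ℝ} (hF : Measurable F) (hW : MeasurableSet W)
    (hWc : α Wᶜ ≤ ENNReal.ofReal ε₁) (hFW : LipUpToOn F ε₁ W) (hV : MeasurableSet V)
    (hVc : ν Vᶜ ≤ ENNReal.ofReal ε₂) (hGV : LipUpToOn G ε₂ V)
    (hFp : ProkhorovBound (α.map F) ν t₁)
    (hφ : ∀ y ∈ thickening t₁ V, φ y ∈ V ∧ dist y (φ y) < r) :
    ∃ W' : Set X, MeasurableSet W' ∧
      α W'ᶜ ≤ ENNReal.ofReal ε₁ + (ENNReal.ofReal t₁ + ENNReal.ofReal ε₂) ∧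
      LipUpToOn (G ∘ φ ∘ F) (ε₁ + (2 * r + ε₂)) W' := by
  refine ⟨W ∩ F ⁻¹' thickening t₁ V, hW.inter (hF isOpen_thickening.measurableSet), ?_, ?_⟩
  · rw [compl_inter]
    exact (measure_union_le _ _).trans
      (add_le_add hWc (hFp.measure_compl_preimage_thickening_le hF hV hVc))
  · have hGφ := hGV.comp (lipUpToOn_of_dist_lt fun y hy => (hφ y hy).2) fun y hy => (hφ y hy).1
    exact hGφ.comp (fun x hx x' hx' => hFW hx.1 hx'.1) fun x hx => hx.2

lemma ProkhorovBound.map_comp_near_map [MeasurableSpace Z] [OpensMeasurableSpace Z]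
    {ρ : Measure Z} {α : Measure Y} (hα : ProkhorovBound α ν t₁)
    (hG : Measurable G) (hφm : Measurable φ) (hV : MeasurableSet V)
    (hVc : ν Vᶜ ≤ ENNReal.ofReal ε₂) (hGV : LipUpToOn G ε₂ V)
    (hGp : ProkhorovBound (ν.map G) ρ t₂)
    (hφ : ∀ y ∈ thickening t₁ V, φ y ∈ V ∧ dist y (φ y) < r)
    (hr : 0 ≤ r) (ht₁ : 0 ≤ t₁) (hε₂ : 0 ≤ ε₂) (ht₂ : 0 ≤ t₂) :
    ProkhorovBound (α.map (G ∘ φ)) ρ (r + t₁ + ε₂ + t₂) := by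
  intro A hA
  set C := G ⁻¹' thickening t₂ A
  have hC : MeasurableSet C := hG isOpen_thickening.measurableSet
  have hsub : thickening t₁ (C ∩ V) ⊆ (G ∘ φ) ⁻¹' thickening (r + t₁ + ε₂ + t₂) A := by
    intro y hy
    obtain ⟨y', ⟨hy'C, hy'V⟩, hyy'⟩ := mem_thickening_iff.1 hy
    obtain ⟨hφV, hφy⟩ := hφ y (mem_thickening_iff.2 ⟨y', hy'V, hyy'⟩)
    obtain ⟨a, ha, hGa⟩ := mem_thickening_iff.1 hy'C
    refine mem_thickening_iff.2 ⟨a, ha, ?_⟩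
    have := hGV hφV hy'V
    have := dist_triangle (G (φ y)) (G y') a
    have := dist_triangle (φ y) y y'
    rw [dist_comm] at hφy
    simp only [Function.comp_apply]
    linarith
  calc ρ A ≤ ν C + ENNReal.ofReal t₂ := by
        rw [← Measure.map_apply hG isOpen_thickening.measurableSet]
        exact hGp A hA
    _ ≤ ν (C ∩ V) + ENNReal.ofReal ε₂ + ENNReal.ofReal t₂ := by
        gcongr
        refine (measure_le_inter_add_sdiff ν C V).trans ?_
        gcongr
        exact (measure_mono (sdiff_subset_compl _ _)).trans hVc
    _ ≤ α (thickening t₁ (C ∩ V)) + ENNReal.ofReal t₁ + ENNReal.ofReal ε₂ + ENNReal.ofReal t₂ := by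
        gcongr
        exact hα _ (hC.inter hV)
    _ ≤ α.map (G ∘ φ) (thickening (r + t₁ + ε₂ + t₂) A) + ENNReal.ofReal (r + t₁ + ε₂ + t₂) := by
        rw [Measure.map_apply (hG.comp hφm) isOpen_thickening.measurableSet, add_assoc, add_assoc,
          ← ENNReal.ofReal_add hε₂ ht₂, ← ENNReal.ofReal_add ht₁ (by positivity)]
        exact add_le_add (measure_mono hsub) (ENNReal.ofReal_le_ofReal (by linarith))

end Composition

theorem comp_lipUpTo_weak_general {X Y Z : Type*} [MetricSpace X]
    [TopologicalSpace.SeparableSpace X] [MeasurableSpace X] [BorelSpace X]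
    [MetricSpace Y] [TopologicalSpace.SeparableSpace Y]
    [MeasurableSpace Y] [BorelSpace Y]
    [MetricSpace Z]
    [MeasurableSpace Z] [BorelSpace Z]
    (μ : Measure X) (ν : Measure Y) (ρ : Measure Z)
    [IsProbabilityMeasure μ] [IsProbabilityMeasure ν] [IsProbabilityMeasure ρ]
    (ε₁ ε₂ : ℝ) (h₁ : 0 ≤ ε₁) (h₂ : 0 ≤ ε₂)
    (f : msupport μ → msupport ν) (hfm : Measurable f) (hfl : LipUpTo μ ν f ε₁)
    (hfp : prokDist (Measure.map (fun x => (f x : Y)) (Measure.comap Subtype.val μ)) ν ≤ ε₁)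
    (g : msupport ν → msupport ρ) (hgm : Measurable g) (hgl : LipUpTo ν ρ g ε₂)
    (hgp : prokDist (Measure.map (fun y => (g y : Z)) (Measure.comap Subtype.val ν)) ρ ≤ ε₂)
    (s : ℝ) (hs : 0 < s) :
    ∃ h : msupport μ → msupport ρ, Measurable h ∧
      LipUpTo μ ρ h (3 * (ε₁ + ε₂) + s) ∧
      prokDist (Measure.map (fun x => (h x : Z)) (Measure.comap Subtype.val μ)) ρ
        ≤ 6 * (ε₁ + ε₂) + s := by
  have := UniformSpace.secondCountable_of_separable X
  have := UniformSpace.secondCountable_of_separable Y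
  set μ' := Measure.comap Subtype.val μ
  set ν' := Measure.comap Subtype.val ν
  obtain ⟨W, hWm, hWc, hfW⟩ := (lipUpTo_iff h₁).1 hfl
  obtain ⟨V, hVm, hVc, hgV⟩ := (lipUpTo_iff h₂).1 hgl
  set η := s / 4 with hη
  have hfp' : ProkhorovBound (μ'.map f) ν' (ε₁ + η) := by
    refine .comap_isometry isometry_subtype_coe
      (.subtype_coe (measurableSet_msupport ν)) ?_
    rw [Measure.map_map measurable_subtype_coe hfm]
    exact prokhorovBound_of_prokDist_lt (hfp.trans_lt (by linarith [hη]))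
  have hgp' : ProkhorovBound (ν'.map (Subtype.val ∘ g)) ρ (ε₂ + η) :=
    prokhorovBound_of_prokDist_lt (hgp.trans_lt (by linarith [hη]))
  obtain ⟨φ, hφm, hφ⟩ := exists_measurable_near_map V (ε := ε₁ + η) (δ := η) (by positivity)
  refine ⟨g ∘ φ ∘ f, hgm.comp (hφm.comp hfm), ?_, ?_⟩
  · obtain ⟨W', hW'm, hW'c, hW'lip⟩ :=
      exists_lipUpToOn_comp_near_map hfm hWm hWc hfW hVm hVc hgV hfp' hφ
    refine (lipUpTo_iff (by positivity)).2
      ⟨W', hW'm, hW'c.trans ?_, hW'lip.mono (by linarith [hη])⟩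
    rw [← ENNReal.ofReal_add (by positivity) h₂, ← ENNReal.ofReal_add h₁ (by positivity)]
    exact ENNReal.ofReal_le_ofReal (by linarith [hη])
  · refine prokDist_le_of_forall_lt (fun t ht => ?_) (by positivity)
    have := hfp'.map_comp_near_map (measurable_subtype_coe.comp hgm) hφm hVm hVc hgV hgp' hφ
      (by positivity) (by positivity) h₂ (by positivity)
    rw [Measure.map_map ((measurable_subtype_coe.comp hgm).comp hφm) hfm] at this
    exact this.mono (by linarith [hη])

/-- Composition of maps that are 1-Lipschitz up to additive
errors (Corollary version). -/
theorem comp_lipUpTo_weak {X Y Z : Type*} [MetricSpace X] [CompleteSpace X]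
    [TopologicalSpace.SeparableSpace X] [MeasurableSpace X] [BorelSpace X]
    [MetricSpace Y] [CompleteSpace Y] [TopologicalSpace.SeparableSpace Y]
    [MeasurableSpace Y] [BorelSpace Y]
    [MetricSpace Z] [CompleteSpace Z] [TopologicalSpace.SeparableSpace Z]
    [MeasurableSpace Z] [BorelSpace Z]
    (μ : Measure X) (ν : Measure Y) (ρ : Measure Z)
    [IsProbabilityMeasure μ] [IsProbabilityMeasure ν] [IsProbabilityMeasure ρ]
    (ε₁ ε₂ : ℝ) (h₁ : 0 ≤ ε₁) (h₂ : 0 ≤ ε₂)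
    (f : msupport μ → msupport ν) (hfm : Measurable f) (hfl : LipUpTo μ ν f ε₁)
    (hfp : prokDist (Measure.map (fun x => (f x : Y)) (Measure.comap Subtype.val μ)) ν ≤ ε₁)
    (g : msupport ν → msupport ρ) (hgm : Measurable g) (hgl : LipUpTo ν ρ g ε₂)
    (hgp : prokDist (Measure.map (fun y => (g y : Z)) (Measure.comap Subtype.val ν)) ρ ≤ ε₂)
    (s : ℝ) (hs : 0 < s) :
    ∃ h : msupport μ → msupport ρ, Measurable h ∧
      LipUpTo μ ρ h (3 * (ε₁ + ε₂) + s) ∧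
      prokDist (Measure.map (fun x => (h x : Z)) (Measure.comap Subtype.val μ)) ρ
        ≤ 6 * (ε₁ + ε₂) + s :=
  comp_lipUpTo_weak_general μ ν ρ ε₁ ε₂ h₁ h₂ f hfm hfl hfp g hgm hgl hgp s hs
end
end
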